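/- arXiv:2102.05478 — 5 statements merged into one kernel-verified Lean document; each statement's English description precedes it below -/
import Mathlib

section
/- Let α ∈ F_{q^3} be such that {α, α^q, α^{q^2}} is an F_q-basis of F_{q^3}, let A,B,C,D ∈ F_{q^3} and E = D + D^q + D^{q^2}. Let ψ : K^3 → K^3 be the linear map given by the matrix M with rows (α, α^q, α^{q^2}), (α^q, α^{q^2}, α), (α^{q^2}, α, α^q). Then: (1) M is invertible; (2) ψ maps S_1 bijectively onto S_2; (3) ψ restricts to a bijection between the set of F_q-rational points of S_1 and the set of points of S_2 of the form (β, β^q, β^{q^2}) with β ∈ F_{q^3}. -/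
noncomputable section

open MvPolynomial

variable (Fq : Type) [Field Fq] [Fintype Fq]

/-- `Kbar Fq` is a fixed algebraic closure of the finite field `Fq`. -/
abbrev Kbar : Type _ := AlgebraicClosure Fq

variable {Fq}

/-- Let `{α, α^q, α^{q^2}}` be a normal basis of `F_{q^3}` over `F_q`,
`A,B,C,D ∈ F_{q^3}`, `E = D + D^q + D^{q^2}`, and let `ψ` be the linear map of `K^3` given
by the matrix `M` with rows `(α, α^q, α^{q^2})`, `(α^q, α^{q^2}, α)`, `(α^{q^2}, α, α^q)`.
Then (1) `M` is invertible; (2) `ψ` maps the surface `S₁ = {F₁ = 0}` bijectively onto the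
surface `S₂ = {F₂ = 0}`; (3) `ψ` restricts to a bijection between the `F_q`-rational
points of `S₁` and the points of `S₂` of the form `(β, β^q, β^{q^2})`, `β ∈ F_{q^3}`. -/
theorem statement_7 (q : ℕ) (hq : q = Fintype.card Fq)
    (α A B Cc D : Kbar Fq)
    (hα3 : α ^ q ^ 3 = α) (hA3 : A ^ q ^ 3 = A) (hB3 : B ^ q ^ 3 = B)
    (hC3 : Cc ^ q ^ 3 = Cc) (hD3 : D ^ q ^ 3 = D)
    (hbasis : ∀ a b c : Kbar Fq, a ^ q = a → b ^ q = b → c ^ q = c →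
      a * α + b * α ^ q + c * α ^ q ^ 2 = 0 → a = 0 ∧ b = 0 ∧ c = 0)
    (L L' L'' : MvPolynomial (Fin 3) (Kbar Fq))
    (hL : L = C α * X 0 + C (α ^ q) * X 1 + C (α ^ q ^ 2) * X 2)
    (hL' : L' = C (α ^ q) * X 0 + C (α ^ q ^ 2) * X 1 + C α * X 2)
    (hL'' : L'' = C (α ^ q ^ 2) * X 0 + C α * X 1 + C (α ^ q) * X 2)
    (F1 : MvPolynomial (Fin 3) (Kbar Fq))
    (hF1 : F1 = C A * L ^ 3 + C (A ^ q) * L' ^ 3 + C (A ^ q ^ 2) * L'' ^ 3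
      + C B * L ^ 2 + C (B ^ q) * L' ^ 2 + C (B ^ q ^ 2) * L'' ^ 2
      + C Cc * L + C (Cc ^ q) * L' + C (Cc ^ q ^ 2) * L''
      + C (D + D ^ q + D ^ q ^ 2) - L * L' * L'')
    (F2 : MvPolynomial (Fin 3) (Kbar Fq))
    (hF2 : F2 = C A * X 0 ^ 3 + C (A ^ q) * X 1 ^ 3 + C (A ^ q ^ 2) * X 2 ^ 3
      + C B * X 0 ^ 2 + C (B ^ q) * X 1 ^ 2 + C (B ^ q ^ 2) * X 2 ^ 2
      + C Cc * X 0 + C (Cc ^ q) * X 1 + C (Cc ^ q ^ 2) * X 2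
      + C (D + D ^ q + D ^ q ^ 2) - X 0 * X 1 * X 2)
    (M : Matrix (Fin 3) (Fin 3) (Kbar Fq))
    (hM : M = Matrix.of ![![α, α ^ q, α ^ q ^ 2],
                          ![α ^ q, α ^ q ^ 2, α],
                          ![α ^ q ^ 2, α, α ^ q]]) :
    IsUnit M.det ∧
    Set.BijOn M.mulVec {v : Fin 3 → Kbar Fq | eval v F1 = 0}
      {v : Fin 3 → Kbar Fq | eval v F2 = 0} ∧
    Set.BijOn M.mulVec
      {v : Fin 3 → Kbar Fq | eval v F1 = 0 ∧ ∀ i, v i ^ q = v i}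
      {v : Fin 3 → Kbar Fq | eval v F2 = 0 ∧
        ∃ β : Kbar Fq, β ^ q ^ 3 = β ∧ v = ![β, β ^ q, β ^ q ^ 2]} := by
  classical
  have hq0 : q ≠ 0 := by rw [hq]; exact Fintype.card_ne_zero
  -- Frobenius is additive
  have hfadd : ∀ x y : Kbar Fq, (x + y) ^ q = x ^ q + y ^ q := by
    haveI hp : Fact (ringChar Fq).Prime := ⟨CharP.char_is_prime Fq _⟩
    obtain ⟨n, -, hn⟩ := FiniteField.card Fq (ringChar Fq)
    haveI : CharP (Kbar Fq) (ringChar Fq) :=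
      charP_of_injective_algebraMap (algebraMap Fq (Kbar Fq)).injective _
    intro x y
    rw [hq, hn]
    exact add_pow_char_pow x y _ n
  have hfneg : ∀ x : Kbar Fq, (-x) ^ q = -(x ^ q) := by
    intro x
    have h := hfadd (-x) x
    rw [neg_add_cancel, zero_pow hq0] at h
    linear_combination -h
  have h2 : ∀ x : Kbar Fq, (x ^ q) ^ q = x ^ q ^ 2 := fun x => by
    rw [← pow_mul, ← pow_two]
  have h3 : ∀ x : Kbar Fq, (x ^ q ^ 2) ^ q = x ^ q ^ 3 := fun x => by
    rw [← pow_mul, ← pow_succ]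
  have hpow3 : ∀ x : Kbar Fq, x ^ q ^ 3 = ((x ^ q) ^ q) ^ q := fun x => by
    rw [show q ^ 3 = q * q * q by ring, pow_mul, pow_mul]
  have hrow : ∀ x y z v0 v1 v2 : Kbar Fq,
      (x * v0 + y * v1 + z * v2) ^ q = x ^ q * v0 ^ q + y ^ q * v1 ^ q + z ^ q * v2 ^ q := by
    intro x y z v0 v1 v2
    rw [hfadd, hfadd, mul_pow, mul_pow, mul_pow]
  -- explicit form of the linear map
  have hmv : ∀ v : Fin 3 → Kbar Fq, M.mulVec v =
      ![α * v 0 + α ^ q * v 1 + α ^ q ^ 2 * v 2,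
        α ^ q * v 0 + α ^ q ^ 2 * v 1 + α * v 2,
        α ^ q ^ 2 * v 0 + α * v 1 + α ^ q * v 2] := by
    intro v
    funext i
    fin_cases i <;>
      simp [hM, Matrix.mulVec, dotProduct, Fin.sum_univ_three]
  -- the key polynomial identity
  have hkey : ∀ v : Fin 3 → Kbar Fq, eval (M.mulVec v) F2 = eval v F1 := by
    intro v
    rw [hmv, hF1, hF2, hL, hL', hL'']
    simp only [eval_add, eval_sub, eval_mul, eval_pow, eval_C, eval_X,
      Matrix.cons_val_zero, Matrix.cons_val_one, Matrix.head_cons,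
      Matrix.cons_val_two, Matrix.tail_cons]
  -- a cube root of unity (possibly 1 in characteristic 3)
  obtain ⟨ω, hω⟩ : ∃ ω : Kbar Fq, ω ^ 2 + ω + 1 = 0 := by
    obtain ⟨ω, hω⟩ := IsAlgClosed.exists_root
      (Polynomial.X ^ 2 + Polynomial.X + 1 : Polynomial (Kbar Fq))
      (by
        intro h
        have hdeg : (Polynomial.X ^ 2 + Polynomial.X + 1 :
            Polynomial (Kbar Fq)).degree = 2 := by compute_degree!
        rw [hdeg] at h
        exact (by norm_num : (2 : WithBot ℕ) ≠ 0) h)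
    exact ⟨ω, by simpa [Polynomial.IsRoot] using hω⟩
  have hω0 : ω ≠ 0 := by intro h; rw [h] at hω; simp at hω
  -- nonvanishing of the three linear factors of the determinant
  have hs : α + α ^ q + α ^ q ^ 2 ≠ 0 := by
    intro h
    have hb := hbasis 1 1 1 (one_pow q) (one_pow q) (one_pow q)
      (by rw [one_mul, one_mul, one_mul]; exact h)
    exact one_ne_zero hb.1
  have key : ∀ ρ : Kbar Fq, ρ ^ 2 + ρ + 1 = 0 →
      α + ρ * α ^ q + ρ ^ 2 * α ^ q ^ 2 ≠ 0 := by
    intro ρ hρ hzero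
    have hρ0 : ρ ≠ 0 := by intro h; rw [h] at hρ; simp at hρ
    have hρ3 : ρ ^ 3 = 1 := by linear_combination (ρ - 1) * hρ
    have hρq' : (ρ ^ q) ^ 2 + ρ ^ q + 1 = 0 := by
      have h := congrArg (· ^ q) hρ
      rw [hfadd, hfadd, one_pow, zero_pow hq0, pow_right_comm] at h
      exact h
    have hsplit : (ρ ^ q - ρ) * (ρ ^ q - ρ ^ 2) = 0 := by
      linear_combination hρq' + (ρ - 1 - ρ ^ q) * hρ
    by_cases hfix : ρ ^ q = ρ
    · have hb := hbasis 1 ρ (ρ ^ 2) (one_pow q) hfix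
        (by rw [pow_right_comm, hfix])
        (by rw [one_mul]; exact hzero)
      exact one_ne_zero hb.1
    · have hρq : ρ ^ q = ρ ^ 2 := by
        rcases mul_eq_zero.mp hsplit with h | h
        · exact absurd (sub_eq_zero.mp h) hfix
        · exact sub_eq_zero.mp h
      have hneq : ρ - ρ ^ 2 ≠ 0 := by
        intro h
        exact hfix (by rw [hρq, ← sub_eq_zero.mp h])
      have hexp : (α + ρ * α ^ q + ρ ^ 2 * α ^ q ^ 2) ^ q
          = α ^ q + ρ ^ q * α ^ q ^ 2 + (ρ ^ q) ^ 2 * α := by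
        rw [hfadd, hfadd, mul_pow, mul_pow, h2 α, h3 α, hα3, pow_right_comm]
      rw [hρq] at hexp
      have h0 : α ^ q + ρ ^ 2 * α ^ q ^ 2 + (ρ ^ 2) ^ 2 * α = 0 := by
        rw [← hexp, hzero, zero_pow hq0]
      have hv0 : ρ * (α + ρ ^ 2 * α ^ q + ρ * α ^ q ^ 2) = 0 := by
        linear_combination h0 + (α ^ q - ρ * α) * hρ3
      have hveq0 : α + ρ ^ 2 * α ^ q + ρ * α ^ q ^ 2 = 0 :=
        (mul_eq_zero.mp hv0).resolve_left hρ0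
      have hdiff : (ρ - ρ ^ 2) * (α ^ q - α ^ q ^ 2) = 0 := by
        linear_combination hzero - hveq0
      have hbc : α ^ q ^ 2 = α ^ q :=
        (sub_eq_zero.mp ((mul_eq_zero.mp hdiff).resolve_left hneq)).symm
      rw [hbc] at hzero
      have hab : 1 * α + (-1) * α ^ q + 0 * α ^ q ^ 2 = 0 := by
        linear_combination hzero - α ^ q * hρ
      have hb := hbasis 1 (-1) 0 (one_pow q) (by rw [hfneg 1, one_pow])
        (zero_pow hq0) hab
      exact one_ne_zero hb.1
  have hωsq : (ω ^ 2) ^ 2 + ω ^ 2 + 1 = 0 := by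
    linear_combination (1 + ω ^ 2 - ω) * hω
  have hω4 : (ω ^ 2) ^ 2 = ω := by linear_combination (ω ^ 2 - ω) * hω
  have hu : α + ω * α ^ q + ω ^ 2 * α ^ q ^ 2 ≠ 0 := key ω hω
  have hv : α + ω ^ 2 * α ^ q + ω * α ^ q ^ 2 ≠ 0 := by
    have h := key (ω ^ 2) hωsq
    rwa [hω4] at h
  have hdetM : M.det = -((α + α ^ q + α ^ q ^ 2) *
      ((α + ω * α ^ q + ω ^ 2 * α ^ q ^ 2) * (α + ω ^ 2 * α ^ q + ω * α ^ q ^ 2))) := by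
    rw [hM, Matrix.det_fin_three]
    simp only [Matrix.of_apply, Matrix.cons_val', Matrix.cons_val_zero,
      Matrix.cons_val_one, Matrix.head_cons, Matrix.empty_val',
      Matrix.cons_val_fin_one, Matrix.head_fin_const, Matrix.cons_val_two,
      Matrix.tail_cons]
    linear_combination (ω ^ 2 * (α * α ^ q * α ^ q ^ 2 + (α ^ q) ^ 2 * α ^ q ^ 2
        + α ^ q * (α ^ q ^ 2) ^ 2)
      + ω * (α * (α ^ q) ^ 2 + α * (α ^ q ^ 2) ^ 2 + (α ^ q) ^ 3 + (α ^ q ^ 2) ^ 3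
        - α * α ^ q * α ^ q ^ 2)
      + (α ^ 2 * α ^ q + 3 * (α * α ^ q * α ^ q ^ 2) + α ^ 2 * α ^ q ^ 2
        - (α ^ q) ^ 3 - (α ^ q ^ 2) ^ 3)) * hω
  have hdet : IsUnit M.det := by
    rw [hdetM, isUnit_iff_ne_zero]
    exact neg_ne_zero.mpr (mul_ne_zero hs (mul_ne_zero hu hv))
  -- the inverse map
  have hMMi : ∀ w : Fin 3 → Kbar Fq, M.mulVec (M⁻¹.mulVec w) = w := fun w => by
    rw [Matrix.mulVec_mulVec, Matrix.mul_nonsing_inv M hdet, Matrix.one_mulVec]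
  have hinj : Function.Injective M.mulVec := by
    intro v w h
    have h' := congrArg M⁻¹.mulVec h
    rwa [Matrix.mulVec_mulVec, Matrix.mulVec_mulVec, Matrix.nonsing_inv_mul M hdet,
      Matrix.one_mulVec, Matrix.one_mulVec] at h'
  refine ⟨hdet, ⟨?_, hinj.injOn, ?_⟩, ⟨?_, hinj.injOn, ?_⟩⟩
  · intro v hv
    simp only [Set.mem_setOf_eq] at hv ⊢
    rw [hkey]; exact hv
  · intro w hw
    simp only [Set.mem_setOf_eq] at hw
    refine ⟨M⁻¹.mulVec w, ?_, hMMi w⟩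
    simp only [Set.mem_setOf_eq]
    have h := hkey (M⁻¹.mulVec w)
    rw [hMMi w] at h
    rw [← h]; exact hw
  · -- rational points map to points of the required shape
    intro v hv
    simp only [Set.mem_setOf_eq] at hv ⊢
    obtain ⟨hv1, hv2⟩ := hv
    have eq1 : (α * v 0 + α ^ q * v 1 + α ^ q ^ 2 * v 2) ^ q
        = α ^ q * v 0 + α ^ q ^ 2 * v 1 + α * v 2 := by
      rw [hrow, h2 α, h3 α, hα3, hv2 0, hv2 1, hv2 2]
    have eq2 : (α ^ q * v 0 + α ^ q ^ 2 * v 1 + α * v 2) ^ q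
        = α ^ q ^ 2 * v 0 + α * v 1 + α ^ q * v 2 := by
      rw [hrow, h2 α, h3 α, hα3, hv2 0, hv2 1, hv2 2]
    have eq3 : (α ^ q ^ 2 * v 0 + α * v 1 + α ^ q * v 2) ^ q
        = α * v 0 + α ^ q * v 1 + α ^ q ^ 2 * v 2 := by
      rw [hrow, h2 α, h3 α, hα3, hv2 0, hv2 1, hv2 2]
    have eq12 : (α * v 0 + α ^ q * v 1 + α ^ q ^ 2 * v 2) ^ q ^ 2
        = α ^ q ^ 2 * v 0 + α * v 1 + α ^ q * v 2 := by
      rw [← h2, eq1, eq2]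
    refine ⟨by rw [hkey]; exact hv1, α * v 0 + α ^ q * v 1 + α ^ q ^ 2 * v 2, ?_, ?_⟩
    · rw [hpow3, eq1, eq2, eq3]
    · rw [hmv, eq1, eq12]
  · -- surjectivity onto points of the required shape
    intro w hw
    simp only [Set.mem_setOf_eq] at hw
    obtain ⟨hw1, β, hβ3, hwe⟩ := hw
    refine ⟨M⁻¹.mulVec w, ?_, hMMi w⟩
    set v : Fin 3 → Kbar Fq := M⁻¹.mulVec w with hvdef
    have hMv : M.mulVec v = w := hMMi w
    have hcomp : (![α * v 0 + α ^ q * v 1 + α ^ q ^ 2 * v 2,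
        α ^ q * v 0 + α ^ q ^ 2 * v 1 + α * v 2,
        α ^ q ^ 2 * v 0 + α * v 1 + α ^ q * v 2] : Fin 3 → Kbar Fq)
        = ![β, β ^ q, β ^ q ^ 2] := by
      rw [← hmv v, hMv, hwe]
    have e0 : α * v 0 + α ^ q * v 1 + α ^ q ^ 2 * v 2 = β := by
      simpa using congrFun hcomp 0
    have e1 : α ^ q * v 0 + α ^ q ^ 2 * v 1 + α * v 2 = β ^ q := by
      simpa using congrFun hcomp 1
    have e2 : α ^ q ^ 2 * v 0 + α * v 1 + α ^ q * v 2 = β ^ q ^ 2 := by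
      simpa using congrFun hcomp 2
    have k0 : α ^ q * v 0 ^ q + α ^ q ^ 2 * v 1 ^ q + α * v 2 ^ q = β ^ q := by
      have hh := congrArg (· ^ q) e0
      rwa [hrow, h2 α, h3 α, hα3] at hh
    have k1 : α ^ q ^ 2 * v 0 ^ q + α * v 1 ^ q + α ^ q * v 2 ^ q = β ^ q ^ 2 := by
      have hh := congrArg (· ^ q) e1
      rwa [hrow, h2 α, h3 α, hα3, h2 β] at hh
    have k2 : α * v 0 ^ q + α ^ q * v 1 ^ q + α ^ q ^ 2 * v 2 ^ q = β := by
      have hh := congrArg (· ^ q) e2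
      rwa [hrow, h2 α, h3 α, hα3, h3 β, hβ3] at hh
    have hv'w : M.mulVec (fun i => v i ^ q) = w := by
      rw [hmv, hwe]
      show ![α * v 0 ^ q + α ^ q * v 1 ^ q + α ^ q ^ 2 * v 2 ^ q,
        α ^ q * v 0 ^ q + α ^ q ^ 2 * v 1 ^ q + α * v 2 ^ q,
        α ^ q ^ 2 * v 0 ^ q + α * v 1 ^ q + α ^ q * v 2 ^ q] = ![β, β ^ q, β ^ q ^ 2]
      rw [k2, k0, k1]
    have hveq : (fun i => v i ^ q) = v := hinj (by rw [hv'w, hMv])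
    constructor
    · have h := hkey v
      rw [hMv] at h
      rw [← h]; exact hw1
    · intro i
      exact congrFun hveq i
end
end

section
/- Assume F_q has characteristic 3, A ∈ F_{q^3} is nonzero and E ∈ F_q. A point (a,b,c) ∈ K^3 is a singular point of the surface S_2 defined by X_0X_1X_2 = A·X_0^3 + A^q·X_1^3 + A^{q^2}·X_2^3 + E if and only if at least two of a, b, c are zero and A·a^3 + A^q·b^3 + A^{q^2}·c^3 + E = 0. In particular, (0,0,0) is singular if and only if E = 0, and the other possible singular points are (0,0,c) with A^{q^2}c^3 = −E, (0,b,0) with A^q b^3 = −E, and (a,0,0) with A a^3 = −E. -/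
noncomputable section

open MvPolynomial

variable (Fq : Type) [Field Fq] [Fintype Fq]

variable {Fq}

/-- In characteristic 3, with `A ∈ F_{q^3}` nonzero and `E ∈ F_q`, a point
`(a,b,c)` of `A^3(K)` is a singular point of the surface
`X0·X1·X2 = A·X0^3 + A^q·X1^3 + A^{q^2}·X2^3 + E` if and only if at least two of `a,b,c`
are zero and `A·a^3 + A^q·b^3 + A^{q^2}·c^3 + E = 0`; in particular `(0,0,0)` is singular
if and only if `E = 0`. -/
theorem statement_8 (q : ℕ) (hq : q = Fintype.card Fq) [CharP Fq 3]
    (A E : Kbar Fq) (hA3 : A ^ q ^ 3 = A) (hA0 : A ≠ 0) (hE : E ^ q = E)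
    (G : MvPolynomial (Fin 3) (Kbar Fq))
    (hG : G = C A * X 0 ^ 3 + C (A ^ q) * X 1 ^ 3 + C (A ^ q ^ 2) * X 2 ^ 3 + C E
      - X 0 * X 1 * X 2) :
    (∀ a b c : Kbar Fq,
      (eval ![a, b, c] G = 0 ∧ ∀ i, eval ![a, b, c] (pderiv i G) = 0) ↔
        ((a = 0 ∧ b = 0) ∨ (a = 0 ∧ c = 0) ∨ (b = 0 ∧ c = 0)) ∧
          A * a ^ 3 + A ^ q * b ^ 3 + A ^ q ^ 2 * c ^ 3 + E = 0) ∧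
    ((eval ![(0 : Kbar Fq), 0, 0] G = 0 ∧
        ∀ i, eval ![(0 : Kbar Fq), 0, 0] (pderiv i G) = 0) ↔ E = 0) := by
  have h3 : (3 : Kbar Fq) = 0 := by
    have : CharP (Kbar Fq) 3 :=
      charP_of_injective_algebraMap (algebraMap Fq (Kbar Fq)).injective 3
    exact CharP.cast_eq_zero _ 3
  subst hG
  have main : ∀ a b c : Kbar Fq,
      (eval ![a, b, c] (C A * X 0 ^ 3 + C (A ^ q) * X 1 ^ 3 + C (A ^ q ^ 2) * X 2 ^ 3 + C E
        - X 0 * X 1 * X 2) = 0 ∧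
        ∀ i, eval ![a, b, c] (pderiv i (C A * X 0 ^ 3 + C (A ^ q) * X 1 ^ 3
          + C (A ^ q ^ 2) * X 2 ^ 3 + C E - X 0 * X 1 * X 2)) = 0) ↔
      ((a = 0 ∧ b = 0) ∨ (a = 0 ∧ c = 0) ∨ (b = 0 ∧ c = 0)) ∧
        A * a ^ 3 + A ^ q * b ^ 3 + A ^ q ^ 2 * c ^ 3 + E = 0 := by
    intro a b c
    have hd : ∀ i : Fin 3, eval ![a, b, c] (pderiv i (C A * X 0 ^ 3 + C (A ^ q) * X 1 ^ 3
        + C (A ^ q ^ 2) * X 2 ^ 3 + C E - X 0 * X 1 * X 2)) =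
        (if i = 0 then -(b * c) else if i = 1 then -(a * c) else -(a * b)) := by
      intro i
      fin_cases i <;>
        simp [pderiv_X, h3] <;> ring_nf <;> simp [h3] <;> ring
    constructor
    · rintro ⟨h0, hp⟩
      have e0 := hp 0; rw [hd 0] at e0
      have e1 := hp 1; rw [hd 1] at e1
      have e2 := hp 2; rw [hd 2] at e2
      norm_num at e0 e1
      norm_num [show (2 : Fin 3) ≠ 0 by decide, show (2 : Fin 3) ≠ 1 by decide] at e2
      have habc : a * b * c = 0 := by
        rcases e2 with h | h <;> simp [h]
      simp only [eval_sub, eval_add, eval_mul, eval_pow, eval_C, eval_X] at h0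
      simp only [Matrix.cons_val_zero, Matrix.cons_val_one, Matrix.head_cons,
        Matrix.cons_val_two, Matrix.tail_cons] at h0
      constructor
      · tauto
      · linear_combination h0 + habc
    · rintro ⟨htwo, hsum⟩
      have habc : a * b * c = 0 := by
        rcases htwo with ⟨h, h'⟩ | ⟨h, h'⟩ | ⟨h, h'⟩ <;> simp [h, h']
      constructor
      · simp only [eval_sub, eval_add, eval_mul, eval_pow, eval_C, eval_X]
        simp only [Matrix.cons_val_zero, Matrix.cons_val_one, Matrix.head_cons,
          Matrix.cons_val_two, Matrix.tail_cons]
        linear_combination hsum - habc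
      · intro i
        rw [hd i]
        fin_cases i <;>
          rcases htwo with ⟨h, h'⟩ | ⟨h, h'⟩ | ⟨h, h'⟩ <;> simp [h, h']
  refine ⟨main, ?_⟩
  rw [main 0 0 0]
  constructor
  · rintro ⟨-, h⟩
    simpa using h
  · intro hE0
    refine ⟨Or.inl ⟨rfl, rfl⟩, by simp [hE0]⟩
end
end

section
/- Assume F_q has characteristic 2 and A ∈ F_{q^3} is nonzero with A^{q^2+q+1} = 1. Then the surface S_2 defined by X_0X_1X_2 = A·X_0^3 + A^q·X_1^3 + A^{q^2}·X_2^3 (i.e., with E = 0) has infinitely many singular points in K^3. -/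
noncomputable section

open MvPolynomial

variable (Fq : Type) [Field Fq] [Fintype Fq]

variable {Fq}

/-- In characteristic 2, if `A ∈ F_{q^3}` is nonzero with
`A^{q^2+q+1} = 1`, then the surface `X0·X1·X2 = A·X0^3 + A^q·X1^3 + A^{q^2}·X2^3`
(the case `E = 0`) has infinitely many singular points in `K^3`. -/
theorem statement_10 (q : ℕ) (hq : q = Fintype.card Fq) [CharP Fq 2]
    (A : Kbar Fq) (hA3 : A ^ q ^ 3 = A) (hA0 : A ≠ 0)
    (hNA : A ^ (q ^ 2 + q + 1) = 1)
    (G : MvPolynomial (Fin 3) (Kbar Fq))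
    (hG : G = C A * X 0 ^ 3 + C (A ^ q) * X 1 ^ 3 + C (A ^ q ^ 2) * X 2 ^ 3
      - X 0 * X 1 * X 2) :
    {v : Fin 3 → Kbar Fq |
      eval v G = 0 ∧ ∀ i, eval v (pderiv i G) = 0}.Infinite := by
  haveI : CharP (Kbar Fq) 2 := charP_of_injective_algebraMap
    (algebraMap Fq (Kbar Fq)).injective 2
  have htwo : (2 : Kbar Fq) = 0 := by
    exact_mod_cast CharP.cast_eq_zero (Kbar Fq) 2
  have hAq0 : A ^ q ≠ 0 := pow_ne_zero _ hA0
  obtain ⟨α, hα⟩ := IsAlgClosed.exists_pow_nat_eq (A * (A ^ q)⁻¹) (n := 3)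
    (by norm_num)
  set β := A ^ q * α ^ 2 with hβ
  -- key identities
  have hαβ : α * β = A := by
    rw [hβ, show α * (A ^ q * α ^ 2) = A ^ q * α ^ 3 from by ring, hα]
    field_simp
  have h3 : A ^ q ^ 2 * β ^ 2 = α := by
    have hα3 : α ^ 3 = A * (A ^ q)⁻¹ := hα
    rw [hβ]
    have : A ^ q ^ 2 * (A ^ q * α ^ 2) ^ 2 = A ^ q ^ 2 * A ^ q * A ^ q * α * α ^ 3 := by
      ring
    rw [this, hα3]
    have hNA' : A ^ q ^ 2 * A ^ q * A = 1 := by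
      rw [← hNA]; ring
    field_simp
    linear_combination α * hNA'
  have h1 : A ^ q * α ^ 3 = A := by
    rw [hα]; field_simp
  have h2 : A ^ q ^ 2 * β ^ 3 = A := by
    have : A ^ q ^ 2 * β ^ 3 = (A ^ q ^ 2 * β ^ 2) * β := by ring
    rw [this, h3, hαβ]
  -- the family of singular points
  apply Set.infinite_of_injective_forall_mem
    (f := fun t : Kbar Fq => ![t, α * t, β * t])
  · intro s t hst
    have := congrFun hst 0
    simpa using this
  · intro t
    constructor
    · simp only [hG, map_sub, map_add, map_mul, eval_C, eval_X, eval_mul, map_pow]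
      simp [Matrix.cons_val_zero, Matrix.cons_val_one]
      linear_combination t^3 * h1 + t^3 * h2 - t^3 * hαβ + A * t^3 * htwo
    · intro i
      fin_cases i <;>
      · simp only [hG, map_sub, map_add, map_mul, pderiv_X, pderiv_C, pderiv_mul,
          pderiv_pow, map_pow]
        simp [Matrix.cons_val_zero, Matrix.cons_val_one]
        try linear_combination (-t^2) * hαβ + A * t^2 * htwo
        try linear_combination (-t^2) * hβ + A ^ q * α^2 * t^2 * htwo
        try linear_combination t^2 * h3 + A ^ q ^ 2 * β^2 * t^2 * htwo
end
end

section
/- Let K be an algebraically closed field and let F ∈ K[X,Y,Z] be a nonzero homogeneous polynomial of degree 3 whose zero locus C in P^2(K) has at least three distinct singular points. Then F is a product of three linear forms, i.e., C is a union of three (not necessarily distinct) projective lines. -/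
noncomputable section

open MvPolynomial

variable {K : Type} [Field K]

def lineP (p q : Fin 3 → K) (F : MvPolynomial (Fin 3) K) : Polynomial K :=
  aeval (fun i => Polynomial.C (p i) + Polynomial.C (q i) * Polynomial.X) F

lemma lineP_eval (p q : Fin 3 → K) (F : MvPolynomial (Fin 3) K) (t : K) :
    (lineP p q F).eval t = eval (p + t • q) F := by
  unfold lineP
  induction F using MvPolynomial.induction_on with
  | C a => simp
  | add f g hf hg => simp [hf, hg]
  | mul_X f i hf =>
      simp only [map_mul, Polynomial.eval_mul, hf, aeval_X, Polynomial.eval_add,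
        Polynomial.eval_C, Polynomial.eval_mul, Polynomial.eval_X, eval_X]
      simp [mul_comm]

lemma lineP_natDegree_le (p q : Fin 3 → K) (F : MvPolynomial (Fin 3) K) :
    (lineP p q F).natDegree ≤ F.totalDegree := by
  have := MvPolynomial.aeval_natDegree_le F le_rfl
    (fun i => Polynomial.C (p i) + Polynomial.C (q i) * Polynomial.X)
    (n := 1)
    (fun i => by
      apply le_trans (Polynomial.natDegree_add_le _ _)
      simp only [Polynomial.natDegree_C, max_le_iff]
      exact ⟨Nat.zero_le _, le_trans (Polynomial.natDegree_mul_le) (by simp)⟩)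
  simpa [lineP] using this

lemma lineP_C (p q : Fin 3 → K) (a : K) : lineP p q (C a) = Polynomial.C a := by
  simp [lineP]

lemma lineP_add (p q : Fin 3 → K) (F G : MvPolynomial (Fin 3) K) :
    lineP p q (F + G) = lineP p q F + lineP p q G := by simp [lineP]

lemma lineP_mul (p q : Fin 3 → K) (F G : MvPolynomial (Fin 3) K) :
    lineP p q (F * G) = lineP p q F * lineP p q G := by simp [lineP]

lemma lineP_derivative (p q : Fin 3 → K) (F : MvPolynomial (Fin 3) K) :
    (lineP p q F).derivative = ∑ i, Polynomial.C (q i) * lineP p q (pderiv i F) := by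
  induction F using MvPolynomial.induction_on with
  | C a => simp [lineP]
  | add f g hf hg => simp only [lineP_add, map_add, Polynomial.derivative_add, hf, hg,
      mul_add, Finset.sum_add_distrib]
  | mul_X f i hf =>
      have hXi : lineP p q (X i) = Polynomial.C (p i) + Polynomial.C (q i) * Polynomial.X := by
        simp [lineP]
      have hpd : ∀ j : Fin 3, pderiv j (f * X i)
          = pderiv j f * X i + f * (if i = j then 1 else 0) := by
        intro j
        rw [pderiv_mul]
        congr 1
        by_cases h : i = j
        · subst h; simp
        · simp [pderiv_X_of_ne (Ne.symm h), h]
      have h2 : ∀ j : Fin 3, lineP p q (f * (if i = j then 1 else 0)) =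
          if i = j then lineP p q f else 0 := by
        intro j; split <;> simp [lineP]
      have hd : Polynomial.derivative (Polynomial.C (p i) + Polynomial.C (q i) * Polynomial.X)
          = Polynomial.C (q i) := by simp
      rw [lineP_mul, Polynomial.derivative_mul, hf, hXi, hd]
      have hrhs : ∀ j : Fin 3, Polynomial.C (q j) * lineP p q (pderiv j (f * X i))
          = Polynomial.C (q j) * lineP p q (pderiv j f)
              * (Polynomial.C (p i) + Polynomial.C (q i) * Polynomial.X)
            + (if i = j then Polynomial.C (q j) * lineP p q f else 0) := by
        intro j
        rw [hpd j, lineP_add, lineP_mul, hXi, h2 j]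
        split <;> ring
      rw [Finset.sum_congr rfl (fun j _ => hrhs j), Finset.sum_add_distrib,
        Finset.sum_ite_eq, ← Finset.sum_mul]
      simp only [Finset.mem_univ, if_true]
      ring

lemma eval_smul_homog {F : MvPolynomial (Fin 3) K} {n : ℕ} (hF : F.IsHomogeneous n)
    (c : K) (x : Fin 3 → K) : eval (c • x) F = c ^ n * eval x F := by
  rw [eval_eq', eval_eq', Finset.mul_sum]
  apply Finset.sum_congr rfl
  intro d hd
  have hdeg : ∑ i, d i = n := by
    have := hF (mem_support_iff.mp hd)
    rw [← this]
    simp [Finsupp.weight, Finsupp.linearCombination, Finsupp.sum_fintype]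
  have : ∀ i : Fin 3, (c • x) i ^ d i = c ^ d i * x i ^ d i := by
    intro i; rw [Pi.smul_apply, smul_eq_mul, mul_pow]
  rw [Finset.prod_congr rfl (fun i _ => this i), Finset.prod_mul_distrib,
    Finset.prod_pow_eq_pow_sum, hdeg]
  ring

lemma lineP_coeff_rev [Infinite K] {F : MvPolynomial (Fin 3) K} {n : ℕ}
    (hF : F.IsHomogeneous n) (p q : Fin 3 → K) {k : ℕ} (hk : k ≤ n) :
    (lineP p q F).coeff k = (lineP q p F).coeff (n - k) := by
  set g : Polynomial K :=
    ∑ j ∈ Finset.range (n + 1), Polynomial.C ((lineP q p F).coeff (n - j)) * Polynomial.X ^ j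
    with hg
  have hnd : ∀ p' q' : Fin 3 → K, (lineP p' q' F).natDegree < n + 1 := by
    intro p' q'
    exact Nat.lt_succ_of_le ((lineP_natDegree_le p' q' F).trans hF.totalDegree_le)
  have heq : lineP p q F = g := by
    have hroots : ∀ t : K, t ≠ 0 → (lineP p q F - g).IsRoot t := by
      intro t ht
      have h1 : (lineP p q F).eval t = eval (p + t • q) F := lineP_eval p q F t
      have h2 : p + t • q = t • (q + t⁻¹ • p) := by
        rw [smul_add, smul_smul, mul_inv_cancel₀ ht, one_smul]
        abel
      have h3 : (lineP p q F).eval t = t ^ n * (lineP q p F).eval t⁻¹ := by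
        rw [h1, h2, eval_smul_homog hF, lineP_eval]
      have h4 : (lineP q p F).eval t⁻¹ =
          ∑ i ∈ Finset.range (n + 1), (lineP q p F).coeff i * t⁻¹ ^ i :=
        Polynomial.eval_eq_sum_range' (hnd q p) _
      have h5 : g.eval t = ∑ j ∈ Finset.range (n + 1),
          (lineP q p F).coeff (n - j) * t ^ j := by
        rw [hg]
        simp [Polynomial.eval_finset_sum]
      have h6 : ∑ j ∈ Finset.range (n + 1), (lineP q p F).coeff (n - j) * t ^ j
          = ∑ i ∈ Finset.range (n + 1), (lineP q p F).coeff i * t ^ (n - i) := by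
        rw [← Finset.sum_range_reflect]
        apply Finset.sum_congr rfl
        intro i hi
        rw [Finset.mem_range] at hi
        have h8 : n + 1 - 1 - i = n - i := by omega
        have h9 : n - (n - i) = i := Nat.sub_sub_self (Nat.lt_succ_iff.mp hi)
        rw [h8, h9]
      have h7 : t ^ n * ∑ i ∈ Finset.range (n + 1), (lineP q p F).coeff i * t⁻¹ ^ i
          = ∑ i ∈ Finset.range (n + 1), (lineP q p F).coeff i * t ^ (n - i) := by
        rw [Finset.mul_sum]
        apply Finset.sum_congr rfl
        intro i hi
        rw [Finset.mem_range, Nat.lt_succ_iff] at hi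
        rw [← mul_assoc, mul_comm (t ^ n), mul_assoc]
        congr 1
        rw [inv_pow, ← pow_sub₀ _ ht hi]
      simp only [Polynomial.IsRoot, Polynomial.eval_sub, h3, h4, h5, h6, h7, sub_self]
    have : (lineP p q F - g) = 0 := by
      apply Polynomial.eq_zero_of_infinite_isRoot
      apply Set.Infinite.mono (s := {t : K | t ≠ 0})
      · exact fun t ht => hroots t ht
      · exact Set.Finite.infinite_compl (Set.finite_singleton 0)
    exact sub_eq_zero.mp this
  rw [heq, hg]
  rw [Polynomial.finset_sum_coeff]
  simp only [Polynomial.coeff_C_mul, Polynomial.coeff_X_pow, mul_ite, mul_one, mul_zero]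
  rw [Finset.sum_ite_eq (Finset.range (n+1)) k]
  simp [Nat.lt_succ_iff.mpr hk]

lemma lineP_coeff_zero (p q : Fin 3 → K) (F : MvPolynomial (Fin 3) K) :
    (lineP p q F).coeff 0 = eval p F := by
  rw [Polynomial.coeff_zero_eq_eval_zero, lineP_eval]
  simp

lemma lineP_coeff_one (p q : Fin 3 → K) (F : MvPolynomial (Fin 3) K) :
    (lineP p q F).coeff 1 = ∑ i, q i * eval p (pderiv i F) := by
  have h1 : (lineP p q F).derivative.coeff 0 = (lineP p q F).coeff 1 := by
    rw [Polynomial.coeff_derivative]; simp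
  rw [← h1, Polynomial.coeff_zero_eq_eval_zero, lineP_derivative]
  rw [Polynomial.eval_finset_sum]
  apply Finset.sum_congr rfl
  intro i _
  rw [Polynomial.eval_mul, Polynomial.eval_C, lineP_eval]
  simp

lemma span_vanish {F : MvPolynomial (Fin 3) K} {n : ℕ} (hF : F.IsHomogeneous n)
    (p q : Fin 3 → K) (hline : lineP p q F = 0) (hq : eval q F = 0) :
    ∀ x ∈ Submodule.span K {p, q}, eval x F = 0 := by
  intro x hx
  obtain ⟨a, b, rfl⟩ := Submodule.mem_span_pair.mp hx
  by_cases ha : a = 0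
  · subst ha
    rw [zero_smul, zero_add, eval_smul_homog hF, hq, mul_zero]
  · have : a • p + b • q = a • (p + (b / a) • q) := by
      rw [smul_add, smul_smul, mul_div_cancel₀ _ ha]
    rw [this, eval_smul_homog hF, ← lineP_eval, hline]
    simp

lemma cubic_vanish [Infinite K] {F : MvPolynomial (Fin 3) K} (hF : F.IsHomogeneous 3)
    (p q : Fin 3 → K)
    (hp0 : eval p F = 0) (hp1 : ∀ i, eval p (pderiv i F) = 0)
    (hq0 : eval q F = 0) (hq1 : ∀ i, eval q (pderiv i F) = 0) :
    ∀ x ∈ Submodule.span K {p, q}, eval x F = 0 := by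
  apply span_vanish hF p q _ hq0
  have hnd : (lineP p q F).natDegree < 4 :=
    Nat.lt_succ_of_le ((lineP_natDegree_le p q F).trans hF.totalDegree_le)
  ext k
  rw [Polynomial.coeff_zero]
  by_cases hk : k < 4
  swap
  · exact Polynomial.coeff_eq_zero_of_natDegree_lt (by omega)
  interval_cases k
  · rw [lineP_coeff_zero]; exact hp0
  · rw [lineP_coeff_one]; simp [hp1]
  · rw [lineP_coeff_rev hF p q (by norm_num : 2 ≤ 3)]
    norm_num [lineP_coeff_one]
    simp [hq1]
  · rw [lineP_coeff_rev hF p q (by norm_num : 3 ≤ 3)]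
    norm_num [lineP_coeff_zero, hq0]

lemma conic_vanish [Infinite K] {G : MvPolynomial (Fin 3) K} (hG : G.IsHomogeneous 2)
    (p q : Fin 3 → K) {a b : K} (ha : a ≠ 0) (hb : b ≠ 0)
    (hp0 : eval p G = 0) (hq0 : eval q G = 0) (hab : eval (a • p + b • q) G = 0) :
    ∀ x ∈ Submodule.span K {p, q}, eval x G = 0 := by
  apply span_vanish hG p q _ hq0
  have hnd : (lineP p q G).natDegree < 3 :=
    Nat.lt_succ_of_le ((lineP_natDegree_le p q G).trans hG.totalDegree_le)
  have hc0 : (lineP p q G).coeff 0 = 0 := by rw [lineP_coeff_zero]; exact hp0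
  have hc2 : (lineP p q G).coeff 2 = 0 := by
    rw [lineP_coeff_rev hG p q (by norm_num : 2 ≤ 2)]
    norm_num [lineP_coeff_zero, hq0]
  have hc1 : (lineP p q G).coeff 1 = 0 := by
    have ht0 : (lineP p q G).eval (b / a) = 0 := by
      have h2 : a • p + b • q = a • (p + (b / a) • q) := by
        rw [smul_add, smul_smul, mul_div_cancel₀ _ ha]
      rw [lineP_eval]
      rw [h2, eval_smul_homog hG] at hab
      exact (mul_eq_zero.mp hab).resolve_left (pow_ne_zero _ ha)
    have := Polynomial.eval_eq_sum_range' hnd (b / a)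
    rw [ht0] at this
    rw [Finset.sum_range_succ, Finset.sum_range_succ, Finset.sum_range_succ] at this
    simp only [Finset.sum_range_zero, hc0, hc2, zero_add, zero_mul, add_zero, pow_one] at this
    have hba : b / a ≠ 0 := div_ne_zero hb ha
    field_simp at this
    simp only [zero_mul, zero_eq_mul] at this
    tauto
  ext k
  rw [Polynomial.coeff_zero]
  by_cases hk : k < 3
  swap
  · exact Polynomial.coeff_eq_zero_of_natDegree_lt (by omega)
  interval_cases k <;> assumption

lemma prime_X_fin3 (j : Fin 3) : Prime (X j : MvPolynomial (Fin 3) K) := by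
  have h0 : Prime (X 0 : MvPolynomial (Fin 3) K) := by
    rw [← MulEquiv.prime_iff (finSuccEquiv K 2).toRingEquiv.toMulEquiv]
    have : (finSuccEquiv K 2) (X 0 : MvPolynomial (Fin 3) K) = Polynomial.X :=
      finSuccEquiv_X_zero
    rw [show ((finSuccEquiv K 2).toRingEquiv.toMulEquiv (X 0 : MvPolynomial (Fin 3) K))
        = Polynomial.X from this]
    exact Polynomial.prime_X
  have : (X j : MvPolynomial (Fin 3) K) = rename (Equiv.swap (0 : Fin 3) j) (X 0) := by simp
  rw [this, show (rename (Equiv.swap (0 : Fin 3) j)) ((X 0 : MvPolynomial (Fin 3) K))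
      = (renameEquiv K (Equiv.swap (0 : Fin 3) j)).toRingEquiv.toMulEquiv (X 0) from rfl,
    MulEquiv.prime_iff (renameEquiv K (Equiv.swap (0 : Fin 3) j)).toRingEquiv.toMulEquiv]
  exact h0

lemma prime_linear (c : Fin 3 → K) (j : Fin 3) (hcj : c j ≠ 0) :
    Prime (∑ i, C (c i) * X i : MvPolynomial (Fin 3) K) := by
  classical
  set L : MvPolynomial (Fin 3) K := ∑ i, C (c i) * X i with hL
  set N : MvPolynomial (Fin 3) K := ∑ i ∈ Finset.univ.erase j, C (c i) * X i with hN
  have hLN : L = C (c j) * X j + N := by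
    rw [hL, hN]
    exact (Finset.add_sum_erase _ _ (Finset.mem_univ j)).symm
  set φ : MvPolynomial (Fin 3) K →ₐ[K] MvPolynomial (Fin 3) K :=
    aeval (fun i => if i = j then L else X i) with hφ
  set ψ : MvPolynomial (Fin 3) K →ₐ[K] MvPolynomial (Fin 3) K :=
    aeval (fun i => if i = j then C (c j)⁻¹ * (X j - N) else X i) with hψ
  have hφN : φ N = N := by
    rw [hN, map_sum]
    apply Finset.sum_congr rfl
    intro i hi
    have : i ≠ j := Finset.ne_of_mem_erase hi
    rw [map_mul, hφ, aeval_C, aeval_X, if_neg this]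
    simp
  have hψN : ψ N = N := by
    rw [hN, map_sum]
    apply Finset.sum_congr rfl
    intro i hi
    have : i ≠ j := Finset.ne_of_mem_erase hi
    rw [map_mul, hψ, aeval_C, aeval_X, if_neg this]
    simp
  have hCinv : (C (c j)⁻¹ : MvPolynomial (Fin 3) K) * C (c j) = 1 := by
    rw [← map_mul, inv_mul_cancel₀ hcj, map_one]
  have h1 : φ.comp ψ = AlgHom.id K _ := by
    apply MvPolynomial.algHom_ext
    intro i
    by_cases h : i = j
    · subst h
      simp only [AlgHom.comp_apply, AlgHom.id_apply]
      rw [hψ, aeval_X, if_pos rfl, map_mul, map_sub]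
      rw [show φ (C (c i)⁻¹) = C (c i)⁻¹ from aeval_C _ _, hφ, aeval_X, if_pos rfl, ← hφ, hφN,
        hLN, add_sub_cancel_right, ← mul_assoc, hCinv, one_mul]
    · simp only [AlgHom.comp_apply, AlgHom.id_apply]
      rw [hψ, aeval_X, if_neg h, hφ, aeval_X, if_neg h]
  have h2 : ψ.comp φ = AlgHom.id K _ := by
    apply MvPolynomial.algHom_ext
    intro i
    by_cases h : i = j
    · subst h
      simp only [AlgHom.comp_apply, AlgHom.id_apply]
      rw [hφ, aeval_X, if_pos rfl, hLN, map_add, map_mul,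
        show ψ (C (c i)) = C (c i) from aeval_C _ _]
      rw [show ψ N = N from hψN, hψ, aeval_X, if_pos rfl]
      rw [← mul_assoc, show (C (c i) : MvPolynomial (Fin 3) K) * C (c i)⁻¹ = 1 by
        rw [← map_mul, mul_inv_cancel₀ hcj, map_one], one_mul, sub_add_cancel]
    · simp only [AlgHom.comp_apply, AlgHom.id_apply]
      rw [hφ, aeval_X, if_neg h, hψ, aeval_X, if_neg h]
  let e : MvPolynomial (Fin 3) K ≃ₐ[K] MvPolynomial (Fin 3) K := AlgEquiv.ofAlgHom φ ψ h1 h2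
  have hLe : L = e.toRingEquiv.toMulEquiv (X j) := by
    show L = φ (X j)
    rw [hφ, aeval_X, if_pos rfl]
  rw [← hL] at *
  rw [hLe, MulEquiv.prime_iff e.toRingEquiv.toMulEquiv]
  exact prime_X_fin3 j

lemma dvd_of_vanish [IsAlgClosed K] {L F : MvPolynomial (Fin 3) K} (hLp : Prime L)
    (h : ∀ x : Fin 3 → K, eval x L = 0 → eval x F = 0) : L ∣ F := by
  have hspan : (Ideal.span {L}).IsPrime :=
    (Ideal.span_singleton_prime hLp.ne_zero).mpr hLp
  have hmem : F ∈ vanishingIdeal K (zeroLocus K (Ideal.span {L})) := by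
    rw [mem_vanishingIdeal_iff]
    intro x hx
    exact h x (mem_zeroLocus_iff.mp hx L (Ideal.mem_span_singleton_self L))
  rw [vanishingIdeal_zeroLocus_eq_radical, hspan.radical] at hmem
  exact Ideal.mem_span_singleton.mp hmem

lemma homog_factor {F G : MvPolynomial (Fin 3) K} {n m : ℕ}
    (hF : F.IsHomogeneous n) (hG : G.IsHomogeneous m) (hmn : m ≤ n) (hdvd : G ∣ F) :
    ∃ H : MvPolynomial (Fin 3) K, H.IsHomogeneous (n - m) ∧ F = G * H := by
  obtain ⟨H0, rfl⟩ := hdvd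
  refine ⟨homogeneousComponent (n - m) H0, homogeneousComponent_isHomogeneous _ _, ?_⟩
  have h1 : homogeneousComponent n (G * H0) = G * H0 := by
    rw [homogeneousComponent_of_mem ((mem_homogeneousSubmodule n _).mpr hF), if_pos rfl]
  conv_lhs => rw [← h1]
  conv_lhs => rw [show G * H0 =
    ∑ i ∈ Finset.range (H0.totalDegree + 1), G * homogeneousComponent i H0 by
      rw [← Finset.mul_sum, sum_homogeneousComponent]]
  rw [map_sum]
  have h2 : ∀ i, homogeneousComponent n (G * homogeneousComponent i H0)
      = if n = m + i then G * homogeneousComponent i H0 else 0 := by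
    intro i
    exact homogeneousComponent_of_mem ((mem_homogeneousSubmodule _ _).mpr
      (hG.mul (homogeneousComponent_isHomogeneous i H0)))
  simp only [h2]
  rw [Finset.sum_eq_single (n - m)]
  · rw [if_pos (by omega)]
  · intro b _ hb
    rw [if_neg (by omega)]
  · intro hnm
    rw [Finset.mem_range] at hnm
    rw [homogeneousComponent_eq_zero _ H0 (by omega), mul_zero, if_pos (by omega)]

lemma exists_linear_form (p q : Fin 3 → K) (hind : LinearIndependent K ![p, q]) :
    ∃ L : MvPolynomial (Fin 3) K, L.IsHomogeneous 1 ∧ Prime L ∧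
      (∀ x : Fin 3 → K, (eval x L = 0 ↔ x ∈ Submodule.span K {p, q})) ∧
      ∃ (j : Fin 3) (c0 : K), pderiv j L = C c0 ∧ c0 ≠ 0 := by
  classical
  set S : Submodule K (Fin 3 → K) := Submodule.span K {p, q} with hS
  have hsetS : ({p, q} : Set (Fin 3 → K)) = Set.range ![p, q] := by
    ext y; simp [Matrix.range_cons, Matrix.range_empty]
    tauto
  have hfinS : Module.finrank K S = 2 := by
    rw [hS, hsetS, finrank_span_eq_card hind]
    simp
  have hfinQ : Module.finrank K ((Fin 3 → K) ⧸ S) = 1 := by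
    have := Submodule.finrank_quotient_add_finrank S
    rw [hfinS, Module.finrank_pi] at this
    simpa using this
  obtain ⟨e⟩ : Nonempty (((Fin 3 → K) ⧸ S) ≃ₗ[K] K) :=
    FiniteDimensional.nonempty_linearEquiv_of_finrank_eq
      (by rw [hfinQ, Module.finrank_self])
  set f : (Fin 3 → K) →ₗ[K] K := e.toLinearMap ∘ₗ S.mkQ with hf
  have hker : LinearMap.ker f = S := by
    rw [hf, LinearMap.ker_comp, LinearEquiv.ker, Submodule.comap_bot, Submodule.ker_mkQ]
  set c : Fin 3 → K := fun i => f (fun j => if i = j then 1 else 0) with hc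
  have hfx : ∀ x : Fin 3 → K, f x = ∑ i, c i * x i := by
    intro x
    conv_lhs => rw [pi_eq_sum_univ x]
    rw [map_sum]
    apply Finset.sum_congr rfl
    intro i _
    rw [map_smul, smul_eq_mul, mul_comm]
  obtain ⟨j, hj⟩ : ∃ j, c j ≠ 0 := by
    by_contra hcon
    push_neg at hcon
    have hf0 : ∀ x, f x = 0 := by intro x; rw [hfx]; simp [hcon]
    have : S = ⊤ := by
      rw [← hker]
      exact eq_top_iff.mpr (fun x _ => hf0 x)
    have h3 : Module.finrank K S = 3 := by rw [this]; simp [Module.finrank_pi]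
    omega
  refine ⟨∑ i, C (c i) * X i, ?_, ?_, ?_, ?_⟩
  · apply IsHomogeneous.sum
    intro i _
    exact (isHomogeneous_X K i).C_mul (c i)
  · exact prime_linear c j hj
  · intro x
    have : eval x (∑ i, C (c i) * X i) = f x := by
      rw [hfx, map_sum]
      apply Finset.sum_congr rfl
      intro i _
      simp
    rw [this, ← hker, LinearMap.mem_ker]
  · refine ⟨j, c j, ?_, hj⟩
    rw [map_sum]
    rw [Finset.sum_eq_single j]
    · rw [pderiv_C_mul, pderiv_X]
      simp
    · intro b _ hb
      rw [pderiv_C_mul, pderiv_X]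
      rw [Pi.single_apply, if_neg hb]
      simp
    · intro h; exact absurd (Finset.mem_univ j) h


/-- Over an algebraically closed field, a plane cubic curve with at least
three distinct singular points is a union of three projective lines: its defining cubic
form is a product of three linear forms. -/
theorem statement_12 (K : Type) [Field K] [IsAlgClosed K]
    (F : MvPolynomial (Fin 3) K) (hF0 : F ≠ 0) (hhom : F.IsHomogeneous 3)
    (Q1 Q2 Q3 : Projectivization K (Fin 3 → K))
    (h12 : Q1 ≠ Q2) (h13 : Q1 ≠ Q3) (h23 : Q2 ≠ Q3)
    (hs1 : eval Q1.rep F = 0 ∧ ∀ i, eval Q1.rep (pderiv i F) = 0)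
    (hs2 : eval Q2.rep F = 0 ∧ ∀ i, eval Q2.rep (pderiv i F) = 0)
    (hs3 : eval Q3.rep F = 0 ∧ ∀ i, eval Q3.rep (pderiv i F) = 0) :
    ∃ L1 L2 L3 : MvPolynomial (Fin 3) K,
      L1.IsHomogeneous 1 ∧ L2.IsHomogeneous 1 ∧ L3.IsHomogeneous 1 ∧
      F = L1 * L2 * L3 := by
  classical
  set p1 := Q1.rep with hp1
  set p2 := Q2.rep with hp2
  set p3 := Q3.rep with hp3
  have hn1 : p1 ≠ 0 := Q1.rep_nonzero
  have hn2 : p2 ≠ 0 := Q2.rep_nonzero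
  have hn3 : p3 ≠ 0 := Q3.rep_nonzero
  have indep : ∀ {u v : Fin 3 → K} (hu : u ≠ 0) (hv : v ≠ 0),
      Projectivization.mk K u hu ≠ Projectivization.mk K v hv → LinearIndependent K ![u, v] := by
    intro u v hu hv hne
    rw [LinearIndependent.pair_iff' hu]
    intro a ha
    exact hne (((Projectivization.mk_eq_mk_iff' K v u hv hu).mpr ⟨a, ha⟩).symm)
  have e1 : Projectivization.mk K p1 hn1 = Q1 := Q1.mk_rep
  have e2 : Projectivization.mk K p2 hn2 = Q2 := Q2.mk_rep
  have e3 : Projectivization.mk K p3 hn3 = Q3 := Q3.mk_rep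
  have ind12 : LinearIndependent K ![p1, p2] := by
    apply indep hn1 hn2
    simp only [e1, e2]
    exact h12
  have ind13 : LinearIndependent K ![p1, p3] := by
    apply indep hn1 hn3
    simp only [e1, e3]
    exact h13
  obtain ⟨L12, hhom12, hprime12, hzero12, j12, c12, hpd12, hc12⟩ := exists_linear_form p1 p2 ind12
  have hvan12 : ∀ x ∈ Submodule.span K {p1, p2}, eval x F = 0 :=
    cubic_vanish hhom p1 p2 hs1.1 hs1.2 hs2.1 hs2.2
  have hdvd12 : L12 ∣ F :=
    dvd_of_vanish hprime12 (fun x hx => hvan12 x ((hzero12 x).mp hx))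
  obtain ⟨G, hG2, hFG⟩ := homog_factor hhom hhom12 (by norm_num) hdvd12
  norm_num at hG2
  by_cases hcol : p3 ∈ Submodule.span K {p1, p2}
  · -- collinear case
    obtain ⟨a, b, hab⟩ := Submodule.mem_span_pair.mp hcol
    have ha : a ≠ 0 := by
      rintro rfl
      rw [zero_smul, zero_add] at hab
      have hb : b ≠ 0 := by rintro rfl; rw [zero_smul] at hab; exact hn3 hab.symm
      refine h23.symm ?_
      rw [← e2, ← e3]
      exact (Projectivization.mk_eq_mk_iff' K p3 p2 hn3 hn2).mpr ⟨b, hab⟩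
    have hb : b ≠ 0 := by
      rintro rfl
      rw [zero_smul, add_zero] at hab
      refine h13.symm ?_
      rw [← e1, ← e3]
      exact (Projectivization.mk_eq_mk_iff' K p3 p1 hn3 hn1).mpr ⟨a, hab⟩
    have hGzero : ∀ x ∈ Submodule.span K {p1, p2}, (∀ i, eval x (pderiv i F) = 0) →
        eval x G = 0 := by
      intro x hx hpd
      have hLx : eval x L12 = 0 := (hzero12 x).mpr hx
      have := hpd j12
      rw [hFG, pderiv_mul, map_add, map_mul, map_mul, hLx, zero_mul, add_zero, hpd12,
        eval_C] at this
      exact (mul_eq_zero.mp this).resolve_left hc12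
    have hG1 : eval p1 G = 0 :=
      hGzero p1 (Submodule.subset_span (by simp)) hs1.2
    have hG2' : eval p2 G = 0 :=
      hGzero p2 (Submodule.subset_span (by simp)) hs2.2
    have hG3 : eval (a • p1 + b • p2) G = 0 := by
      rw [hab]
      exact hGzero p3 hcol hs3.2
    have hvanG : ∀ x ∈ Submodule.span K {p1, p2}, eval x G = 0 :=
      conic_vanish hG2 p1 p2 ha hb hG1 hG2' hG3
    have hdvdG : L12 ∣ G :=
      dvd_of_vanish hprime12 (fun x hx => hvanG x ((hzero12 x).mp hx))
    obtain ⟨M, hM1, hGM⟩ := homog_factor hG2 hhom12 (by norm_num) hdvdG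
    norm_num at hM1
    exact ⟨L12, L12, M, hhom12, hhom12, hM1, by rw [hFG, hGM, mul_assoc]⟩
  · -- noncollinear case
    obtain ⟨L13, hhom13, hprime13, hzero13, _⟩ := exists_linear_form p1 p3 ind13
    have hvan13 : ∀ x ∈ Submodule.span K {p1, p3}, eval x F = 0 :=
      cubic_vanish hhom p1 p3 hs1.1 hs1.2 hs3.1 hs3.2
    have hdvd13 : L13 ∣ F :=
      dvd_of_vanish hprime13 (fun x hx => hvan13 x ((hzero13 x).mp hx))
    have hnd : ¬ L13 ∣ L12 := by
      intro ⟨u, hu⟩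
      have h3 : eval p3 L13 = 0 := (hzero13 p3).mpr (Submodule.subset_span (by simp))
      have : eval p3 L12 = 0 := by rw [hu, map_mul, h3, zero_mul]
      exact hcol ((hzero12 p3).mp this)
    have hdvdG : L13 ∣ G := by
      rw [hFG] at hdvd13
      exact (hprime13.dvd_or_dvd hdvd13).resolve_left hnd
    obtain ⟨M, hM1, hGM⟩ := homog_factor hG2 hhom13 (by norm_num) hdvdG
    norm_num at hM1
    exact ⟨L12, L13, M, hhom12, hhom13, hM1, by rw [hFG, hGM, mul_assoc]⟩
end
end

section
/- Let S ⊆ P^3(K) be an absolutely irreducible cubic surface with only finitely many singular points, and suppose P_1, P_2, P_3, P_4 are four distinct double points of S (singular points of multiplicity two). Then no three of the points P_1, P_2, P_3, P_4 are collinear, and the four points do not lie on a common plane. -/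
noncomputable section

open MvPolynomial

variable (K : Type) [Field K]

/-- The restriction of `F` to the parametrized line `t ↦ v + t • w`, as a polynomial in
the parameter `t`. -/
def polyAlong (F : MvPolynomial (Fin 4) K) (v w : Fin 4 → K) : Polynomial K :=
  aeval (fun i => Polynomial.C (v i) + Polynomial.C (w i) * Polynomial.X) F

/-- `F` has multiplicity at least `m` at the point `v`: along every line through `v` the
restricted polynomial vanishes to order at least `m`; equivalently, the lowest-degree
homogeneous part of `F(v + ·)` has degree at least `m`. -/
def multAtLeast (F : MvPolynomial (Fin 4) K) (v : Fin 4 → K) (m : ℕ) : Prop :=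
  ∀ w : Fin 4 → K, ∀ k < m, (polyAlong K F v w).coeff k = 0

/-- A point is singular for `F` if `F` and all four partial derivatives vanish there. -/
def IsSingularAt (F : MvPolynomial (Fin 4) K) (p : Projectivization K (Fin 4 → K)) : Prop :=
  eval p.rep F = 0 ∧ ∀ i, eval p.rep (pderiv i F) = 0

/-- A double point: a singular point of multiplicity exactly two. -/
def IsDoublePt (F : MvPolynomial (Fin 4) K) (p : Projectivization K (Fin 4 → K)) : Prop :=
  IsSingularAt K F p ∧ multAtLeast K F p.rep 2 ∧ ¬ multAtLeast K F p.rep 3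

lemma eval_polyAlong (F : MvPolynomial (Fin 4) K) (v w : Fin 4 → K) (t : K) :
    (polyAlong K F v w).eval t = eval (fun i => v i + w i * t) F := by
  induction F using MvPolynomial.induction_on with
  | C a => simp [polyAlong]
  | add p q hp hq => simp only [polyAlong, map_add, Polynomial.eval_add] at *; rw [hp, hq]
  | mul_X p i hp => simp only [polyAlong, map_mul, Polynomial.eval_mul, aeval_X] at *; rw [hp]; simp

lemma eval_aeval (g : Fin 4 → MvPolynomial (Fin 4) K) (x : Fin 4 → K)
    (F : MvPolynomial (Fin 4) K) :
    eval x (aeval g F) = eval (fun i => eval x (g i)) F := by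
  induction F using MvPolynomial.induction_on with
  | C a => simp
  | add p q hp hq => simp only [map_add]; rw [hp, hq]
  | mul_X p i hp => simp only [map_mul, aeval_X, eval_X]; rw [hp]

lemma natDegree_polyAlong_le (F : MvPolynomial (Fin 4) K) (v w : Fin 4 → K) :
    (polyAlong K F v w).natDegree ≤ F.totalDegree := by
  rw [polyAlong, aeval_def, eval₂_eq]
  apply Polynomial.natDegree_sum_le_of_forall_le
  intro d hd
  refine le_trans (Polynomial.natDegree_mul_le) ?_
  have h1 : (algebraMap K (Polynomial K) (coeff d F)).natDegree = 0 := Polynomial.natDegree_C _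
  rw [h1, zero_add]
  refine le_trans (Polynomial.natDegree_prod_le _ _) ?_
  calc (∑ i ∈ d.support, ((Polynomial.C (v i) + Polynomial.C (w i) * Polynomial.X) ^ d i).natDegree)
      ≤ ∑ i ∈ d.support, d i := by
        refine Finset.sum_le_sum (fun i _ => ?_)
        refine (Polynomial.natDegree_pow_le).trans ?_
        have : (Polynomial.C (v i) + Polynomial.C (w i) * Polynomial.X).natDegree ≤ 1 := by
          refine le_trans (Polynomial.natDegree_add_le _ _) ?_
          simp only [Polynomial.natDegree_C, Nat.zero_le, max_le_iff, true_and]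
          exact le_trans (Polynomial.natDegree_mul_le) (by simp)
        calc d i * (Polynomial.C (v i) + Polynomial.C (w i) * Polynomial.X).natDegree
            ≤ d i * 1 := Nat.mul_le_mul_left (d i) this
          _ = d i := Nat.mul_one _
    _ ≤ F.totalDegree := MvPolynomial.le_totalDegree hd

lemma homog_eval_smul {F : MvPolynomial (Fin 4) K} {d : ℕ} (h : F.IsHomogeneous d)
    (c : K) (x : Fin 4 → K) : eval (c • x) F = c ^ d * eval x F := by
  rw [eval_eq, eval_eq, Finset.mul_sum]
  refine Finset.sum_congr rfl (fun m hm => ?_)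
  have hd : ∑ i ∈ m.support, m i = d := by
    have := h (mem_support_iff.mp hm)
    simpa [Finsupp.weight_apply, Finsupp.sum] using this
  have : ∏ i ∈ m.support, (c • x) i ^ m i
      = (∏ i ∈ m.support, c ^ m i) * ∏ i ∈ m.support, x i ^ m i := by
    rw [← Finset.prod_mul_distrib]
    exact Finset.prod_congr rfl (fun i _ => by simp [mul_pow])
  rw [this, Finset.prod_pow_eq_pow_sum, hd]
  ring

lemma isHomogeneous_pderiv {F : MvPolynomial (Fin 4) K} {d : ℕ}
    (h : F.IsHomogeneous (d + 1)) (i : Fin 4) : (pderiv i F).IsHomogeneous d := by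
  conv_lhs => rw [← F.support_sum_monomial_coeff]
  rw [map_sum]
  refine IsHomogeneous.sum _ _ _ (fun m hm => ?_)
  rw [pderiv_monomial]
  by_cases h0 : m i = 0
  · simp only [h0, Nat.cast_zero, mul_zero, map_zero]
    exact isHomogeneous_zero (Fin 4) K d
  · refine isHomogeneous_monomial _ ?_
    have hle : Finsupp.single i 1 ≤ m := by
      rw [Finsupp.single_le_iff]; omega
    have hsplit : (m - Finsupp.single i 1) + Finsupp.single i 1 = m :=
      tsub_add_cancel_of_le hle
    have hdm : m.degree = d + 1 := by
      have := h (mem_support_iff.mp hm)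
      rw [Finsupp.degree_eq_weight_one]
      exact this
    have : (m - Finsupp.single i 1).degree + (Finsupp.single i 1).degree = m.degree := by
      rw [Finsupp.degree_eq_weight_one, ← map_add, hsplit]
    have hs1 : (Finsupp.single i 1).degree = 1 := by
      exact Finsupp.degree_single i 1
    omega

lemma polyAlong_coeff_zero (F : MvPolynomial (Fin 4) K) (v w : Fin 4 → K) :
    (polyAlong K F v w).coeff 0 = eval v F := by
  rw [Polynomial.coeff_zero_eq_eval_zero, eval_polyAlong]
  simp

lemma polyAlong_coeff_rev [Infinite K] {F : MvPolynomial (Fin 4) K} {d : ℕ} (hF : F.IsHomogeneous d)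
    (v w : Fin 4 → K) {k : ℕ} (hk : k ≤ d) :
    (polyAlong K F v w).coeff k = (polyAlong K F w v).coeff (d - k) := by
  set h' : Polynomial K := polyAlong K F w v with hh'
  have hdeg' : (polyAlong K F w v).natDegree < d + 1 :=
    Nat.lt_succ_of_le ((natDegree_polyAlong_le K F w v).trans hF.totalDegree_le)
  have key : polyAlong K F v w
      = ∑ j ∈ Finset.range (d + 1), Polynomial.C (h'.coeff (d - j)) * Polynomial.X ^ j := by
    apply Polynomial.eq_of_infinite_eval_eq
    apply Set.Infinite.mono (s := {t : K | t ≠ 0})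
    swap
    · exact Set.Finite.infinite_compl (Set.finite_singleton 0)
    intro t ht
    have ht' : (t : K) ≠ 0 := ht
    simp only [Set.mem_setOf_eq]
    have h1 : (polyAlong K F v w).eval t = t ^ d * h'.eval t⁻¹ := by
      rw [eval_polyAlong, eval_polyAlong]
      have : (fun i => v i + w i * t) = t • (fun i => w i + v i * t⁻¹) := by
        funext i
        simp only [Pi.smul_apply, smul_eq_mul]
        field_simp
        ring
      rw [this, homog_eval_smul K hF]
    have h2 : h'.eval t⁻¹ = ∑ j ∈ Finset.range (d + 1), h'.coeff j * t⁻¹ ^ j :=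
      Polynomial.eval_eq_sum_range' hdeg' _
    rw [h1, h2, Finset.mul_sum]
    rw [Polynomial.eval_finset_sum]
    simp only [Polynomial.eval_mul, Polynomial.eval_C, Polynomial.eval_pow, Polynomial.eval_X]
    rw [← Finset.sum_range_reflect (fun j => h'.coeff (d - j) * t ^ j) (d + 1)]
    refine Finset.sum_congr rfl (fun j hj => ?_)
    rw [Finset.mem_range] at hj
    have hjd : j ≤ d := Nat.lt_succ_iff.mp hj
    have e1 : d + 1 - 1 - j = d - j := by omega
    rw [e1]
    have e2 : d - (d - j) = j := by omega
    rw [e2]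
    have e3 : t ^ d * t⁻¹ ^ j = t ^ (d - j) := by
      rw [inv_pow]
      rw [mul_inv_eq_iff_eq_mul₀ (pow_ne_zero _ ht'), ← pow_add]
      congr 1
      omega
    rw [show t ^ d * (h'.coeff j * t⁻¹ ^ j) = h'.coeff j * (t ^ d * t⁻¹ ^ j) by ring, e3]
  rw [key]
  rw [Polynomial.finset_sum_coeff]
  simp only [Polynomial.coeff_C_mul, Polynomial.coeff_X_pow]
  rw [Finset.sum_eq_single k]
  · simp
  · intro j _ hjk
    simp [if_neg (Ne.symm hjk)]
  · intro hk'
    exact absurd (Finset.mem_range.mpr (Nat.lt_succ_of_le hk)) (fun h => hk' h)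

lemma eq_C_coeff_one_mul_X {p : Polynomial K} (h : ∀ k, k ≠ 1 → p.coeff k = 0) :
    p = Polynomial.C (p.coeff 1) * Polynomial.X := by
  ext k
  by_cases hk : k = 1
  · subst hk
    simp
  · rw [h k hk]
    simp only [Polynomial.coeff_C_mul, Polynomial.coeff_X]
    rw [if_neg (fun h' => hk h'.symm), mul_zero]

/-- The restriction of a homogeneous cubic to the line through two points where it has
multiplicity at least 2 is identically zero. -/
lemma polyAlong_eq_zero_of_two_doubles [Infinite K] {F : MvPolynomial (Fin 4) K}
    (hF : F.IsHomogeneous 3) {p q : Fin 4 → K}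
    (hp : multAtLeast K F p 2) (hq : multAtLeast K F q 2) :
    polyAlong K F p q = 0 := by
  ext k
  rw [Polynomial.coeff_zero]
  match k with
  | 0 => exact hp q 0 (by omega)
  | 1 => exact hp q 1 (by omega)
  | 2 =>
    rw [polyAlong_coeff_rev K hF p q (by omega : 2 ≤ 3)]
    exact hq p 1 (by omega)
  | 3 =>
    rw [polyAlong_coeff_rev K hF p q (by omega : 3 ≤ 3)]
    exact hq p 0 (by omega)
  | (n+4) =>
    apply Polynomial.coeff_eq_zero_of_natDegree_lt
    have := (natDegree_polyAlong_le K F p q).trans hF.totalDegree_le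
    omega

lemma eval_line_zero [Infinite K] {F : MvPolynomial (Fin 4) K}
    (hF : F.IsHomogeneous 3) {p q : Fin 4 → K}
    (hp : multAtLeast K F p 2) (hq : multAtLeast K F q 2) (a b : K) :
    eval (a • p + b • q) F = 0 := by
  by_cases ha : a = 0
  · subst ha
    have h0 : eval q F = 0 := by
      rw [← polyAlong_coeff_zero K F q p]
      exact hq p 0 (by omega)
    have : (0 : K) • p + b • q = b • q := by simp
    rw [this, homog_eval_smul K hF, h0, mul_zero]
  · have h0 := polyAlong_eq_zero_of_two_doubles K hF hp hq
    have : a • p + b • q = a • (fun i => p i + q i * (b / a)) := by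
      funext i
      simp only [Pi.add_apply, Pi.smul_apply, smul_eq_mul]
      field_simp
    rw [this, homog_eval_smul K hF, ← eval_polyAlong, h0]
    simp

open Projectivization in
lemma rep_ne_smul_rep {A B : Projectivization K (Fin 4 → K)} (hAB : A ≠ B) (c : K) :
    A.rep ≠ c • B.rep := by
  intro h
  have hc : c ≠ 0 := by
    intro h0
    subst h0
    exact A.rep_nonzero (by simpa using h)
  apply hAB
  rw [← A.mk_rep, ← B.mk_rep]
  rw [Projectivization.mk_eq_mk_iff' K _ _ A.rep_nonzero B.rep_nonzero]
  exact ⟨c, h.symm⟩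

lemma indep_pair_of_ne {A B : Projectivization K (Fin 4 → K)} (hAB : A ≠ B) (α β : K)
    (h : α • A.rep + β • B.rep = 0) : α = 0 ∧ β = 0 := by
  by_cases hα : α = 0
  · subst hα
    refine ⟨rfl, ?_⟩
    by_contra hβ
    have : B.rep = 0 := by
      have := congrArg (fun x => β⁻¹ • x) h
      simpa [smul_smul, inv_mul_cancel₀ hβ] using this
    exact B.rep_nonzero this
  · exfalso
    apply rep_ne_smul_rep K hAB (-(β/α))
    have := congrArg (fun x => α⁻¹ • x) h
    simp only [smul_add, smul_smul, inv_mul_cancel₀ hα, one_smul, smul_zero] at this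
    have h2 : A.rep = -((α⁻¹ * β) • B.rep) := by
      rw [eq_neg_iff_add_eq_zero]
      exact this
    rw [h2, ← neg_smul]
    congr 1
    field_simp

/-- Core collinearity contradiction: three distinct double points cannot have linearly
dependent representatives, else the whole line is singular. -/
lemma collinear_contra [IsAlgClosed K] {F : MvPolynomial (Fin 4) K}
    (hhom : F.IsHomogeneous 3)
    (hfin : {x : Projectivization K (Fin 4 → K) | IsSingularAt K F x}.Finite)
    {A B C : Projectivization K (Fin 4 → K)} (hAB : A ≠ B)
    (hdA : IsDoublePt K F A) (hdB : IsDoublePt K F B) (hdC : IsDoublePt K F C)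
    {a b : K} (ha : a ≠ 0) (hb : b ≠ 0)
    (hrel : C.rep = a • A.rep + b • B.rep) : False := by
  set p := A.rep with hp
  set q := B.rep with hq
  -- every point p + t • q is singular
  have hline : ∀ t : K, eval (p + t • q) F = 0 ∧ ∀ i, eval (p + t • q) (pderiv i F) = 0 := by
    intro t
    constructor
    · have h0 := polyAlong_eq_zero_of_two_doubles K hhom hdA.2.1 hdB.2.1
      have : p + t • q = (fun i => p i + q i * t) := by
        funext i; simp [mul_comm]
      rw [this, ← eval_polyAlong, h0, Polynomial.eval_zero]
    · intro i
      set g := pderiv i F with hg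
      have hgh : g.IsHomogeneous 2 := isHomogeneous_pderiv K hhom i
      set h := polyAlong K g p q with hh
      have hc0 : h.coeff 0 = 0 := by
        rw [hh, polyAlong_coeff_zero]
        exact hdA.1.2 i
      have hc2 : h.coeff 2 = 0 := by
        rw [hh, polyAlong_coeff_rev K hgh p q (le_refl 2), polyAlong_coeff_zero]
        exact hdB.1.2 i
      have hchigh : ∀ k, k ≠ 1 → h.coeff k = 0 := by
        intro k hk
        match k with
        | 0 => exact hc0
        | 1 => exact absurd rfl hk
        | 2 => exact hc2
        | (n+3) =>
          apply Polynomial.coeff_eq_zero_of_natDegree_lt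
          have hb2 := (natDegree_polyAlong_le K g p q).trans hgh.totalDegree_le
          rw [← hh] at hb2
          omega
      have hCX := eq_C_coeff_one_mul_X K hchigh
      -- evaluate at b / a to kill coeff 1
      have hroot : h.eval (b / a) = 0 := by
        rw [hh, eval_polyAlong]
        have : (fun i => p i + q i * (b / a)) = a⁻¹ • C.rep := by
          funext i
          rw [hrel]
          simp only [Pi.smul_apply, Pi.add_apply, smul_eq_mul]
          field_simp
        rw [this, homog_eval_smul K hgh, hdC.1.2 i, mul_zero]
      rw [hCX] at hroot
      simp only [Polynomial.eval_mul, Polynomial.eval_C, Polynomial.eval_X] at hroot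
      have hba : b / a ≠ 0 := div_ne_zero hb ha
      have hc1 : h.coeff 1 = 0 := by
        rcases mul_eq_zero.mp hroot with h' | h'
        · exact h'
        · exact absurd h' hba
      have hzero : h = 0 := by
        rw [hCX, hc1]
        simp
      have : p + t • q = (fun i => p i + q i * t) := by
        funext i; simp [mul_comm]
      rw [this, ← eval_polyAlong, ← hh, hzero, Polynomial.eval_zero]
  -- the corresponding projective points are singular, distinct, infinitely many
  have hnz : ∀ t : K, p + t • q ≠ 0 := by
    intro t h0
    apply rep_ne_smul_rep K hAB (-t)
    rw [← hp, ← hq, neg_smul, eq_neg_iff_add_eq_zero]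
    exact h0
  set f : K → Projectivization K (Fin 4 → K) :=
    fun t => Projectivization.mk K (p + t • q) (hnz t) with hf
  have hinjf : Function.Injective f := by
    intro t s hts
    rw [hf] at hts
    simp only at hts
    rw [Projectivization.mk_eq_mk_iff' K _ _ (hnz t) (hnz s)] at hts
    obtain ⟨c, hc⟩ := hts
    have hrel2 : (c - 1) • p + (c * s - t) • q = 0 := by
      have : c • (p + s • q) - (p + t • q) = 0 := by rw [hc]; simp
      rw [← this]
      simp only [smul_add, smul_smul, sub_smul, one_smul]
      abel
    obtain ⟨h1, h2⟩ := indep_pair_of_ne K hAB _ _ hrel2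
    have hc1 : c = 1 := sub_eq_zero.mp h1
    rw [hc1, one_mul] at h2
    exact (sub_eq_zero.mp h2).symm
  have hmem : ∀ t : K, f t ∈ {x : Projectivization K (Fin 4 → K) | IsSingularAt K F x} := by
    intro t
    have hmk : Projectivization.mk K ((f t).rep) (f t).rep_nonzero
        = Projectivization.mk K (p + t • q) (hnz t) := by
      rw [Projectivization.mk_rep]
    rw [Projectivization.mk_eq_mk_iff' K _ _ (f t).rep_nonzero (hnz t)] at hmk
    obtain ⟨c, hc⟩ := hmk
    constructor
    · rw [← hc, homog_eval_smul K hhom, (hline t).1, mul_zero]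
    · intro i
      rw [← hc, homog_eval_smul K (isHomogeneous_pderiv K hhom i), (hline t).2 i, mul_zero]
  exact (Set.infinite_of_injective_forall_mem hinjf hmem) hfin

/-- If `p4 = a•p1 + b•p2 + c•p3` with `a b c ≠ 0` and all four are double points of the
cubic `F`, then `F` vanishes identically on the span of `p1, p2, p3`. -/
lemma plane_vanish [Infinite K] {F : MvPolynomial (Fin 4) K} (hhom : F.IsHomogeneous 3)
    {p1 p2 p3 p4 : Fin 4 → K}
    (h1 : multAtLeast K F p1 2) (h2 : multAtLeast K F p2 2)
    (h3 : multAtLeast K F p3 2) (h4 : multAtLeast K F p4 2)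
    {a b c : K} (ha : a ≠ 0) (hb : b ≠ 0) (hc : c ≠ 0)
    (hrel : p4 = a • p1 + b • p2 + c • p3) (c1 c2 c3 : K) :
    eval (c1 • p1 + c2 • p2 + c3 • p3) F = 0 := by
  set v : Fin 4 → K := c2 • p2 + c3 • p3 with hv
  set ψ : Polynomial K := polyAlong K F v p1 with hψ
  have hc2' : ψ.coeff 2 = 0 := by
    rw [hψ, polyAlong_coeff_rev K hhom v p1 (by omega : 2 ≤ 3)]
    exact h1 v 1 (by omega)
  have hc3' : ψ.coeff 3 = 0 := by
    rw [hψ, polyAlong_coeff_rev K hhom v p1 (by omega : 3 ≤ 3)]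
    exact h1 v 0 (by omega)
  have hc0' : ψ.coeff 0 = 0 := by
    rw [hψ, polyAlong_coeff_zero, hv]
    exact eval_line_zero K hhom h2 h3 c2 c3
  have hchigh : ∀ k, k ≠ 1 → ψ.coeff k = 0 := by
    intro k hk
    match k with
    | 0 => exact hc0'
    | 1 => exact absurd rfl hk
    | 2 => exact hc2'
    | 3 => exact hc3'
    | (n+4) =>
      apply Polynomial.coeff_eq_zero_of_natDegree_lt
      have hb2 := (natDegree_polyAlong_le K F v p1).trans hhom.totalDegree_le
      rw [← hψ] at hb2
      omega
  have hCX := eq_C_coeff_one_mul_X K hchigh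
  -- kill the linear coefficient using one more root
  have hc1' : ψ.coeff 1 = 0 := by
    by_cases hcc2 : c2 ≠ 0
    · -- use the line through p3 and p4
      have hroot : ψ.eval (a * c2 / b) = 0 := by
        rw [hψ, eval_polyAlong]
        have : (fun i => v i + p1 i * (a * c2 / b))
            = (c3 - (c2 / b) * c) • p3 + (c2 / b) • p4 := by
          funext i
          rw [hrel, hv]
          simp only [Pi.add_apply, Pi.smul_apply, smul_eq_mul]
          field_simp
          ring
        rw [this]
        exact eval_line_zero K hhom h3 h4 _ _
      rw [hCX] at hroot
      simp only [Polynomial.eval_mul, Polynomial.eval_C, Polynomial.eval_X] at hroot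
      rcases mul_eq_zero.mp hroot with h' | h'
      · exact h'
      · exact absurd h' (div_ne_zero (mul_ne_zero ha hcc2) hb)
    · push_neg at hcc2
      by_cases hcc3 : c3 ≠ 0
      · -- use the line through p2 and p4
        have hroot : ψ.eval (a * c3 / c) = 0 := by
          rw [hψ, eval_polyAlong]
          have : (fun i => v i + p1 i * (a * c3 / c))
              = (c2 - (c3 / c) * b) • p2 + (c3 / c) • p4 := by
            funext i
            rw [hrel, hv]
            simp only [Pi.add_apply, Pi.smul_apply, smul_eq_mul]
            field_simp
            ring
          rw [this]
          exact eval_line_zero K hhom h2 h4 _ _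
        rw [hCX] at hroot
        simp only [Polynomial.eval_mul, Polynomial.eval_C, Polynomial.eval_X] at hroot
        rcases mul_eq_zero.mp hroot with h' | h'
        · exact h'
        · exact absurd h' (div_ne_zero (mul_ne_zero ha hcc3) hc)
      · push_neg at hcc3
        have hv0 : v = 0 := by
          rw [hv, hcc2, hcc3]
          simp
        have hroot : ψ.eval 1 = 0 := by
          rw [hψ, eval_polyAlong, hv0]
          have : (fun i => (0 : Fin 4 → K) i + p1 i * 1) = p1 := by
            funext i; simp
          rw [this, ← polyAlong_coeff_zero K F p1 p1]
          exact h1 p1 0 (by omega)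
        rw [hCX] at hroot
        simpa using hroot
  have hzero : ψ = 0 := by
    rw [hCX, hc1']
    simp
  have : c1 • p1 + c2 • p2 + c3 • p3 = (fun i => v i + p1 i * c1) := by
    funext i
    rw [hv]
    simp only [Pi.add_apply, Pi.smul_apply, smul_eq_mul]
    ring
  rw [this, ← eval_polyAlong, ← hψ, hzero, Polynomial.eval_zero]

lemma X_dvd_sub_subst (G : MvPolynomial (Fin 4) K) (i0 : Fin 4) :
    X i0 ∣ G - aeval (fun j => if j = i0 then 0 else X j) G := by
  induction G using MvPolynomial.induction_on with
  | C a => simp [aeval_C, algebraMap_eq]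
  | add p q hp hq =>
    rw [map_add]
    have : p + q - (aeval (fun j => if j = i0 then 0 else X j) p
        + aeval (fun j => if j = i0 then 0 else X j) q)
        = (p - aeval (fun j => if j = i0 then 0 else X j) p)
        + (q - aeval (fun j => if j = i0 then 0 else X j) q) := by ring
    rw [this]
    exact dvd_add hp hq
  | mul_X p i hp =>
    rw [map_mul, aeval_X]
    by_cases hi : i = i0
    · subst hi
      rw [if_pos rfl, mul_zero, sub_zero]
      exact Dvd.intro_left p rfl
    · rw [if_neg hi]
      have : p * X i - aeval (fun j => if j = i0 then 0 else X j) p * X i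
          = (p - aeval (fun j => if j = i0 then 0 else X j) p) * X i := by ring
      rw [this]
      exact hp.mul_right _

/-- Substitution of variables by a linear change of coordinates given by a matrix. -/
def linSub (A : Matrix (Fin 4) (Fin 4) K) :
    MvPolynomial (Fin 4) K →ₐ[K] MvPolynomial (Fin 4) K :=
  aeval (fun i => ∑ j, MvPolynomial.C (A i j) * X j)

lemma linSub_comp (A B : Matrix (Fin 4) (Fin 4) K) :
    (linSub K A).comp (linSub K B) = linSub K (B * A) := by
  apply MvPolynomial.algHom_ext
  intro i
  simp only [linSub, AlgHom.coe_comp, Function.comp_apply, aeval_X, map_sum, map_mul, aeval_C,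
    algebraMap_eq]
  simp_rw [Finset.mul_sum]
  rw [Finset.sum_comm]
  refine Finset.sum_congr rfl (fun k _ => ?_)
  rw [Matrix.mul_apply, map_sum, Finset.sum_mul]
  refine Finset.sum_congr rfl (fun j _ => ?_)
  rw [C_mul]
  ring

lemma linSub_one : linSub K (1 : Matrix (Fin 4) (Fin 4) K) = AlgHom.id K _ := by
  apply MvPolynomial.algHom_ext
  intro i
  simp only [linSub, aeval_X, AlgHom.coe_id, id_eq, Matrix.one_apply]
  rw [Finset.sum_eq_single i]
  · simp
  · intro j _ hji
    rw [if_neg (Ne.symm hji), map_zero, zero_mul]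
  · intro h
    exact absurd (Finset.mem_univ i) h

lemma eval_linSub (A : Matrix (Fin 4) (Fin 4) K) (x : Fin 4 → K) (H : MvPolynomial (Fin 4) K) :
    eval x (linSub K A H) = eval (fun i => ∑ j, A i j * x j) H := by
  rw [linSub, eval_aeval]
  have : (fun i => eval x (∑ j, MvPolynomial.C (A i j) * X j)) = fun i => ∑ j, A i j * x j := by
    funext i
    simp
  rw [this]

lemma coplanar_contra [IsAlgClosed K] {F : MvPolynomial (Fin 4) K}
    (hhom : F.IsHomogeneous 3) (hirr : Irreducible F)
    {p1 p2 p3 : Fin 4 → K} (hind : LinearIndependent K ![p1, p2, p3])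
    (hvan : ∀ c1 c2 c3 : K, eval (c1 • p1 + c2 • p2 + c3 • p3) F = 0)
    (hsing : ∀ i, eval p1 (pderiv i F) = 0) : False := by
  classical
  -- a vector outside of the span of p1 p2 p3
  obtain ⟨v0, hv0⟩ : ∃ v0, v0 ∉ Submodule.span K (Set.range ![p1, p2, p3]) := by
    have hlt : Module.finrank K (Submodule.span K (Set.range ![p1, p2, p3]))
        < Module.finrank K (Fin 4 → K) := by
      rw [finrank_span_eq_card hind, Module.finrank_fin_fun]
      simp
    obtain ⟨v0, hv0⟩ := Submodule.exists_of_finrank_lt _ hlt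
    refine ⟨v0, fun h => ?_⟩
    exact hv0 1 one_ne_zero (by rwa [one_smul])
  -- build a basis with b 0 = v0, b 1 = p1, b 2 = p2, b 3 = p3
  have hli : LinearIndependent K ![v0, p1, p2, p3] := hind.fin_cons hv0
  have hcard : Fintype.card (Fin 4) = Module.finrank K (Fin 4 → K) := by
    rw [Module.finrank_fin_fun]
    simp
  set bas := basisOfLinearIndependentOfCardEqFinrank hli hcard with hbasdef
  have hbas : ⇑bas = ![v0, p1, p2, p3] :=
    coe_basisOfLinearIndependentOfCardEqFinrank hli hcard
  set M : Matrix (Fin 4) (Fin 4) K := Matrix.of fun i j => ![v0, p1, p2, p3] j i with hMdef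
  have hM : M = (Pi.basisFun K (Fin 4)).toMatrix ⇑bas := by
    ext i j
    rw [Module.Basis.toMatrix_apply, Pi.basisFun_repr, hbas]
    rfl
  letI : Invertible M := by
    rw [hM]
    exact (Pi.basisFun K (Fin 4)).invertibleToMatrix bas
  set N : Matrix (Fin 4) (Fin 4) K := ⅟M with hNdef
  set Φ := linSub K M with hΦ
  set Ψ := linSub K N with hΨdef
  have hΨΦ : ∀ H, Ψ (Φ H) = H := by
    intro H
    have : Ψ.comp Φ = AlgHom.id K _ := by
      rw [hΨdef, hΦ, linSub_comp, mul_invOf_self, linSub_one]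
    calc Ψ (Φ H) = (Ψ.comp Φ) H := rfl
      _ = H := by rw [this]; rfl
  have hΦΨ : ∀ H, Φ (Ψ H) = H := by
    intro H
    have : Φ.comp Ψ = AlgHom.id K _ := by
      rw [hΨdef, hΦ, linSub_comp, invOf_mul_self, linSub_one]
    calc Φ (Ψ H) = (Φ.comp Ψ) H := rfl
      _ = H := by rw [this]; rfl
  set G := Φ F with hG
  -- G vanishes whenever the 0-th coordinate vanishes
  have hE1 : ∀ y : Fin 4 → K, y 0 = 0 → eval y G = 0 := by
    intro y hy0
    rw [hG, hΦ, eval_linSub]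
    have : (fun i => ∑ j, M i j * y j) = y 1 • p1 + y 2 • p2 + y 3 • p3 := by
      funext i
      rw [Fin.sum_univ_four]
      simp only [hMdef, Matrix.of_apply, Matrix.cons_val_zero, Matrix.cons_val_one,
        Matrix.head_cons, Pi.add_apply, Pi.smul_apply, smul_eq_mul, hy0]
      simp only [Matrix.cons_val_two, Matrix.cons_val_three, Matrix.tail_cons, Matrix.head_cons]
      ring
    rw [this]
    exact hvan _ _ _
  -- the substitution of X 0 by 0 in G is 0
  have hG0 : aeval (fun j => if j = 0 then (0 : MvPolynomial (Fin 4) K) else X j) G = 0 := by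
    apply MvPolynomial.funext
    intro x
    rw [eval_aeval, map_zero]
    have : (fun i => eval x (if i = 0 then 0 else X i)) = fun i => if i = 0 then 0 else x i := by
      funext i
      by_cases hi : i = 0 <;> simp [hi]
    rw [this]
    exact hE1 _ (by simp)
  have hdvd : X (0 : Fin 4) ∣ G := by
    have := X_dvd_sub_subst K G 0
    rwa [hG0, sub_zero] at this
  obtain ⟨Q, hQ⟩ := hdvd
  set ℓ := Ψ (X 0) with hℓ
  have hFeq : F = ℓ * Ψ Q := by
    rw [hℓ, ← map_mul, ← hQ]
    exact (hΨΦ F).symm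
  -- ℓ as an explicit linear polynomial
  have hℓexp : ℓ = ∑ j, MvPolynomial.C (N 0 j) * X j := by
    rw [hℓ, hΨdef, linSub, aeval_X]
  rcases hirr.isUnit_or_isUnit hFeq with hu | hu
  · -- the linear factor cannot be a unit
    obtain ⟨u, hu1⟩ := isUnit_iff_exists_inv.mp hu
    have := congrArg (eval (0 : Fin 4 → K)) hu1
    rw [map_mul, map_one, hℓexp] at this
    simp at this
  · -- the quadratic factor cannot be a unit either, since then every point of the
    -- plane would be singular, contradicting the singularity structure at p1
    obtain ⟨u, hu1⟩ := isUnit_iff_exists_inv.mp hu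
    have hQ'ne : eval p1 (Ψ Q) ≠ 0 := by
      intro h0
      have := congrArg (eval p1) hu1
      rw [map_mul, map_one, h0, zero_mul] at this
      exact zero_ne_one this
    have hpd : ∀ i, pderiv i ℓ = MvPolynomial.C (N 0 i) := by
      intro i
      rw [hℓexp, map_sum]
      have : ∀ j, pderiv i (MvPolynomial.C (N 0 j) * X j)
          = MvPolynomial.C (N 0 j) * (if j = i then 1 else 0) := by
        intro j
        rw [pderiv_mul, pderiv_C, zero_mul, zero_add, pderiv_X]
        congr 1
        rw [Pi.single_apply]
      simp_rw [this]
      rw [Finset.sum_eq_single i]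
      · simp
      · intro j _ hji
        rw [if_neg hji, mul_zero]
      · intro h
        exact absurd (Finset.mem_univ i) h
    have hℓp1 : eval p1 ℓ = 0 := by
      have h1 : eval (Pi.single (1 : Fin 4) (1 : K) : Fin 4 → K) (Φ ℓ) = 0 := by
        rw [hΦΨ, eval_X]
        rw [Pi.single_apply]
        rw [if_neg (by decide)]
      rw [hΦ, eval_linSub] at h1
      have h2 : (fun i => ∑ j, M i j * (Pi.single (1 : Fin 4) (1 : K) : Fin 4 → K) j) = p1 := by
        funext i
        rw [Finset.sum_eq_single 1]
        · simp [hMdef]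
        · intro j _ hj1
          rw [Pi.single_apply, if_neg hj1, mul_zero]
        · intro h
          exact absurd (Finset.mem_univ 1) h
      rw [h2] at h1
      exact h1
    have hN0 : ∀ i, N 0 i = 0 := by
      intro i
      have h1 := hsing i
      rw [hFeq, pderiv_mul, map_add, map_mul, map_mul, hpd, hℓp1, zero_mul, add_zero,
        eval_C] at h1
      rcases mul_eq_zero.mp h1 with h' | h'
      · exact h'
      · exact absurd h' hQ'ne
    have hNM := invOf_mul_self M
    have h00 := congrFun (congrFun hNM 0) 0
    rw [Matrix.mul_apply] at h00
    simp only [← hNdef] at h00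
    rw [Finset.sum_eq_zero (fun j _ => by rw [hN0 j, zero_mul])] at h00
    rw [Matrix.one_apply_eq] at h00
    exact zero_ne_one h00

/-- If an absolutely irreducible cubic surface with only finitely many
singular points has four distinct double points, then no three of them are collinear
(every three of them have linearly independent representatives) and the four points are
not coplanar (their representatives are linearly independent). -/
theorem statement_13 [IsAlgClosed K]
    (F : MvPolynomial (Fin 4) K) (hF0 : F ≠ 0) (hhom : F.IsHomogeneous 3)
    (hirr : Irreducible F)
    (hfin : {x : Projectivization K (Fin 4 → K) | IsSingularAt K F x}.Finite)
    (Ps : Fin 4 → Projectivization K (Fin 4 → K))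
    (hinj : Function.Injective Ps)
    (hdouble : ∀ i, IsDoublePt K F (Ps i)) :
    (∀ e : Fin 3 ↪ Fin 4, LinearIndependent K (fun i => (Ps (e i)).rep)) ∧
      LinearIndependent K (fun i => (Ps i).rep) := by
  classical
  have part1 : ∀ e : Fin 3 ↪ Fin 4, LinearIndependent K (fun i => (Ps (e i)).rep) := by
    intro e
    by_contra hdep
    rw [Fintype.not_linearIndependent_iff] at hdep
    obtain ⟨g, hsum, i0, hi0⟩ := hdep
    rw [Fin.sum_univ_three] at hsum
    have hne : ∀ i j : Fin 3, i ≠ j → Ps (e i) ≠ Ps (e j) := fun i j hij h =>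
      hij (e.injective (hinj h))
    have hall : ∀ i, g i ≠ 0 := by
      intro i hgi
      have hz : g 0 = 0 ∧ g 1 = 0 ∧ g 2 = 0 := by
        fin_cases i
        · have hgi' : g 0 = 0 := hgi
          rw [hgi', zero_smul, zero_add] at hsum
          obtain ⟨h1, h2⟩ := indep_pair_of_ne K (hne 1 2 (by decide)) _ _ hsum
          exact ⟨hgi', h1, h2⟩
        · have hgi' : g 1 = 0 := hgi
          rw [hgi', zero_smul, add_zero] at hsum
          obtain ⟨h1, h2⟩ := indep_pair_of_ne K (hne 0 2 (by decide)) _ _ hsum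
          exact ⟨h1, hgi', h2⟩
        · have hgi' : g 2 = 0 := hgi
          rw [hgi', zero_smul, add_zero] at hsum
          obtain ⟨h1, h2⟩ := indep_pair_of_ne K (hne 0 1 (by decide)) _ _ hsum
          exact ⟨h1, h2, hgi'⟩
      obtain ⟨h0, h1, h2⟩ := hz
      fin_cases i0 <;> simp_all
    have hrel : (Ps (e 2)).rep = (-(g 0) / g 2) • (Ps (e 0)).rep
        + (-(g 1) / g 2) • (Ps (e 1)).rep := by
      funext i
      have hi := congrFun hsum i
      simp only [Pi.add_apply, Pi.smul_apply, smul_eq_mul, Pi.zero_apply] at hi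
      simp only [Pi.add_apply, Pi.smul_apply, smul_eq_mul]
      have hg2 := hall 2
      field_simp
      linear_combination hi
    exact collinear_contra K hhom hfin (hne 0 1 (by decide)) (hdouble (e 0)) (hdouble (e 1))
      (hdouble (e 2)) (div_ne_zero (neg_ne_zero.mpr (hall 0)) (hall 2))
      (div_ne_zero (neg_ne_zero.mpr (hall 1)) (hall 2)) hrel
  refine ⟨part1, ?_⟩
  by_contra hdep
  rw [Fintype.not_linearIndependent_iff] at hdep
  obtain ⟨g, hsum, i0, hi0⟩ := hdep
  have hall : ∀ i, g i ≠ 0 := by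
    intro i hgi
    have hli3 := part1 ⟨i.succAbove, Fin.succAbove_right_injective⟩
    rw [Fintype.linearIndependent_iff] at hli3
    have hsum3 : ∑ k : Fin 3, g (i.succAbove k) • (Ps (i.succAbove k)).rep = 0 := by
      rw [Fin.sum_univ_succAbove (fun j => g j • (Ps j).rep) i, hgi, zero_smul, zero_add] at hsum
      exact hsum
    have hz := hli3 (fun k => g (i.succAbove k)) hsum3
    by_cases hii : i = i0
    · exact hi0 (hii ▸ hgi)
    · obtain ⟨k, hk⟩ := Fin.exists_succAbove_eq (Ne.symm hii)
      exact hi0 (hk ▸ hz k)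
  -- now all four coefficients are nonzero; express the fourth point in the others
  rw [Fin.sum_univ_four] at hsum
  have hrel : (Ps 3).rep = (-(g 0) / g 3) • (Ps 0).rep + (-(g 1) / g 3) • (Ps 1).rep
      + (-(g 2) / g 3) • (Ps 2).rep := by
    funext i
    have hi := congrFun hsum i
    simp only [Pi.add_apply, Pi.smul_apply, smul_eq_mul, Pi.zero_apply] at hi
    simp only [Pi.add_apply, Pi.smul_apply, smul_eq_mul]
    have hg3 := hall 3
    field_simp
    linear_combination hi
  have hind3 : LinearIndependent K ![(Ps 0).rep, (Ps 1).rep, (Ps 2).rep] := by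
    have h := part1 ⟨Fin.castSucc, Fin.castSucc_injective 3⟩
    have heq : (fun k : Fin 3 => (Ps ((⟨Fin.castSucc, Fin.castSucc_injective 3⟩ :
        Fin 3 ↪ Fin 4) k)).rep) = ![(Ps 0).rep, (Ps 1).rep, (Ps 2).rep] := by
      funext k
      fin_cases k <;> rfl
    rwa [heq] at h
  have hvan : ∀ c1 c2 c3 : K,
      eval (c1 • (Ps 0).rep + c2 • (Ps 1).rep + c3 • (Ps 2).rep) F = 0 :=
    plane_vanish K hhom (hdouble 0).2.1 (hdouble 1).2.1 (hdouble 2).2.1 (hdouble 3).2.1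
      (div_ne_zero (neg_ne_zero.mpr (hall 0)) (hall 3))
      (div_ne_zero (neg_ne_zero.mpr (hall 1)) (hall 3))
      (div_ne_zero (neg_ne_zero.mpr (hall 2)) (hall 3)) hrel
  exact coplanar_contra K hhom hirr hind3 hvan (fun i => (hdouble 0).1.2 i)
end
end
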